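/- arXiv:1905.04327 — 4 statements merged into one kernel-verified Lean document; each statement's English description precedes it below -/
import Mathlib

section
/- Let A = R(σ,f) be a simple GWA satisfying the standing hypotheses and let α be a root of f with multiplicity n_α. For each j = 1,…,n_α, the graded right A-module M_α^{-j} = A/((z−α)^j A + xA) has a filtration of length j whose successive quotients are all isomorphic to M_α^{-} = A/((z−α)A + xA); in particular M_α^{-j} has length j. -/
/- The generalized Weyl algebra `A = R(σ, f)`: the quotient of the free algebra on
generators `{x, y} ∪ R` by the relations making `R → A` a `k`-algebra map together with
`xy = f`, `yx = σ⁻¹(f)`, `xr = σ(r)x`, `yr = σ⁻¹(r)y` for all `r ∈ R`. -/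

/-- Generators of the GWA: the elements of `R`, and `x`, `y`. -/
inductive GWAgen (R : Type) : Type
  | r (a : R) : GWAgen R
  | x : GWAgen R
  | y : GWAgen R

open FreeAlgebra in
/-- The defining relations of the generalized Weyl algebra `R(σ, f)`. -/
inductive GWArel (k : Type) [CommRing k] (R : Type) [CommRing R] [Algebra k R]
    (σ : R ≃ₐ[k] R) (f : R) :
    FreeAlgebra k (GWAgen R) → FreeAlgebra k (GWAgen R) → Prop
  | add (a b : R) : GWArel k R σ f (ι k (.r (a + b))) (ι k (.r a) + ι k (.r b))
  | mul (a b : R) : GWArel k R σ f (ι k (.r (a * b))) (ι k (.r a) * ι k (.r b))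
  | alg (c : k) : GWArel k R σ f (ι k (.r (algebraMap k R c))) (algebraMap k _ c)
  | xy : GWArel k R σ f (ι k .x * ι k .y) (ι k (.r f))
  | yx : GWArel k R σ f (ι k .y * ι k .x) (ι k (.r (σ.symm f)))
  | xr (a : R) : GWArel k R σ f (ι k .x * ι k (.r a)) (ι k (.r (σ a)) * ι k .x)
  | yr (a : R) : GWArel k R σ f (ι k .y * ι k (.r a)) (ι k (.r (σ.symm a)) * ι k .y)

/-- The generalized Weyl algebra `A = R(σ, f)`. -/
abbrev GWA (k : Type) [CommRing k] (R : Type) [CommRing R] [Algebra k R]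
    (σ : R ≃ₐ[k] R) (f : R) : Type :=
  RingQuot (GWArel k R σ f)

namespace GWA

variable (k : Type) [CommRing k] (R : Type) [CommRing R] [Algebra k R]
  (σ : R ≃ₐ[k] R) (f : R)

/-- The element `x` of the GWA. -/
noncomputable def X : GWA k R σ f :=
  RingQuot.mkAlgHom k (GWArel k R σ f) (FreeAlgebra.ι k .x)

/-- The element `y` of the GWA. -/
noncomputable def Y : GWA k R σ f :=
  RingQuot.mkAlgHom k (GWArel k R σ f) (FreeAlgebra.ι k .y)

/-- The image in the GWA of an element `a` of the base ring `R`. -/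
noncomputable def r (a : R) : GWA k R σ f :=
  RingQuot.mkAlgHom k (GWArel k R σ f) (FreeAlgebra.ι k (.r a))

end GWA

open Polynomial

/-- The GWA `A = k[z](σ, f)` with base ring `R = k[z]` and `σ(z) = z + 1`
(Hypothesis 2.1(1)). -/
noncomputable abbrev GWAk (k : Type) [Field k] (f : k[X]) : Type :=
  GWA k k[X] (algEquivAevalXAddC (1 : k)) f

/-- The graded right ideal `(z − α)^j A + xA` of `A`, viewed as a submodule of `A` over
the opposite ring `Aᵐᵒᵖ`. -/
noncomputable def rightIdealM (k : Type) [Field k] (f : k[X]) (α : k) (j : ℕ) :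
    Submodule (GWAk k f)ᵐᵒᵖ (GWAk k f) :=
  Submodule.span (GWAk k f)ᵐᵒᵖ
    {GWA.r k k[X] (algEquivAevalXAddC (1 : k)) f ((X - C α) ^ j),
      GWA.X k k[X] (algEquivAevalXAddC (1 : k)) f}

/-- The graded right `A`-module `M_α^{−j} = A/((z − α)^j A + xA)`. -/
noncomputable abbrev Mminus (k : Type) [Field k] (f : k[X]) (α : k) (j : ℕ) : Type :=
  GWAk k f ⧸ rightIdealM k f α j



/- ————————————————— auxiliary development ————————————————— -/

noncomputable section GWAProofAux
set_option maxHeartbeats 1000000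
set_option synthInstance.maxHeartbeats 400000

namespace GWAP

open Polynomial MulOpposite

variable (k : Type) [Field k] (f : k[X]) (α : k)

abbrev sA : k[X] ≃ₐ[k] k[X] := algEquivAevalXAddC (1 : k)
local notation "Ak" => GWAk k f
local notation "σA" => sA k

/-- `r` as an algebra homomorphism `k[X] →ₐ[k] A`. -/
def rrHom : k[X] →ₐ[k] Ak where
  toFun p := GWA.r k k[X] σA f p
  map_one' := by
    have h := RingQuot.mkAlgHom_rel k (GWArel.alg (k := k) (R := k[X]) (σ := σA) (f := f) 1)
    simpa [GWA.r] using h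
  map_mul' p q := by
    have h := RingQuot.mkAlgHom_rel k (GWArel.mul (k := k) (R := k[X]) (σ := σA) (f := f) p q)
    simpa [GWA.r] using h
  map_zero' := by
    have h := RingQuot.mkAlgHom_rel k (GWArel.alg (k := k) (R := k[X]) (σ := σA) (f := f) 0)
    simpa [GWA.r] using h
  map_add' p q := by
    have h := RingQuot.mkAlgHom_rel k (GWArel.add (k := k) (R := k[X]) (σ := σA) (f := f) p q)
    simpa [GWA.r] using h
  commutes' c := by
    have h := RingQuot.mkAlgHom_rel k (GWArel.alg (k := k) (R := k[X]) (σ := σA) (f := f) c)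
    simpa [GWA.r] using h

local notation "rr" => rrHom k f
local notation "XX" => GWA.X k k[X] σA f
local notation "YY" => GWA.Y k k[X] σA f

lemma X_mul_Y : XX * YY = rr f := by
  have h := RingQuot.mkAlgHom_rel k (GWArel.xy (k := k) (R := k[X]) (σ := σA) (f := f))
  simpa [GWA.X, GWA.Y, rrHom, GWA.r] using h

lemma Y_mul_X : YY * XX = rr ((sA k).symm f) := by
  have h := RingQuot.mkAlgHom_rel k (GWArel.yx (k := k) (R := k[X]) (σ := σA) (f := f))
  simpa [GWA.X, GWA.Y, rrHom, GWA.r] using h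

lemma X_mul_r (p : k[X]) : XX * rr p = rr (σA p) * XX := by
  have h := RingQuot.mkAlgHom_rel k (GWArel.xr (k := k) (R := k[X]) (σ := σA) (f := f) p)
  simpa [GWA.X, rrHom, GWA.r] using h

lemma Y_mul_r (p : k[X]) : YY * rr p = rr ((sA k).symm p) * YY := by
  have h := RingQuot.mkAlgHom_rel k (GWArel.yr (k := k) (R := k[X]) (σ := σA) (f := f) p)
  simpa [GWA.Y, rrHom, GWA.r] using h

lemma r_mul_X (p : k[X]) : rr p * XX = XX * rr ((sA k).symm p) := by
  have h := X_mul_r k f ((sA k).symm p)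
  rw [AlgEquiv.apply_symm_apply] at h
  exact h.symm

lemma r_mul_Y (p : k[X]) : rr p * YY = YY * rr (σA p) := by
  have h := Y_mul_r k f (σA p)
  rw [AlgEquiv.symm_apply_apply] at h
  exact h.symm

lemma r_mul_Ypow (p : k[X]) (m : ℕ) : rr p * YY ^ m = YY ^ m * rr ((σA ^ m) p) := by
  induction m generalizing p with
  | zero => simp
  | succ m ih =>
    have hp : ((σA ^ (m+1)) p) = (σA ^ m) (σA p) := by rw [pow_succ]; rfl
    rw [pow_succ', ← mul_assoc, r_mul_Y, mul_assoc, ih (σA p), hp, ← mul_assoc, ← pow_succ']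

/-- The ideal `((z+m-α)^q, f(z+m)) = σ^m((z-α)^q, f)` of `k[X]`. -/
def Idl (q m : ℕ) : Ideal k[X] :=
  Ideal.span {(σA ^ m) ((X - C α) ^ q), (σA ^ m) f}

lemma mem_Idl_iff {q m : ℕ} {u : k[X]} :
    u ∈ Idl k f α q m ↔ ∃ v w, v * (σA ^ m) ((X - C α) ^ q) + w * (σA ^ m) f = u :=
  Ideal.mem_span_pair

lemma sigma_pow_succ_apply (m : ℕ) (p : k[X]) :
    (σA ^ (m+1)) p = σA ((σA ^ m) p) := by rw [pow_succ']; rfl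

lemma sigma_mem_Idl {q m : ℕ} {u : k[X]} (hu : u ∈ Idl k f α q m) :
    σA u ∈ Idl k f α q (m+1) := by
  obtain ⟨v, w, rfl⟩ := (mem_Idl_iff k f α).1 hu
  refine (mem_Idl_iff k f α).2 ⟨σA v, σA w, ?_⟩
  rw [map_add, map_mul, map_mul, ← sigma_pow_succ_apply, ← sigma_pow_succ_apply]

lemma sigma_symm_mem_Idl {q m : ℕ} {u : k[X]} (hu : u ∈ Idl k f α q (m+1)) :
    (sA k).symm u ∈ Idl k f α q m := by
  obtain ⟨v, w, rfl⟩ := (mem_Idl_iff k f α).1 hu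
  refine (mem_Idl_iff k f α).2 ⟨(sA k).symm v, (sA k).symm w, ?_⟩
  have h1 : (sA k).symm ((σA ^ (m+1)) ((X - C α) ^ q)) = (σA ^ m) ((X - C α) ^ q) := by
    rw [sigma_pow_succ_apply, AlgEquiv.symm_apply_apply]
  have h2 : (sA k).symm ((σA ^ (m+1)) f) = (σA ^ m) f := by
    rw [sigma_pow_succ_apply, AlgEquiv.symm_apply_apply]
  rw [map_add, map_mul, map_mul, h1, h2]

/-- The component module `W_m = k[X]/((z+m-α)^q, f(z+m))`. -/
abbrev Wq (q m : ℕ) : Type := k[X] ⧸ (Idl k f α q m).restrictScalars k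

/-- The class of a polynomial in `W_m`. -/
abbrev mkW (q m : ℕ) (p : k[X]) : Wq k f α q m := Submodule.Quotient.mk p

/-- The representation space `V = ⊕ₘ W_m`. -/
abbrev Vq (q : ℕ) : Type := Π₀ m : ℕ, Wq k f α q m

/-- multiplication by `p` on `W_m`. -/
def zmap (q m : ℕ) (p : k[X]) : Wq k f α q m →ₗ[k] Wq k f α q m :=
  Submodule.mapQ _ _ (LinearMap.mulLeft k p)
    (fun u hu => by
      simp only [Submodule.mem_comap, Submodule.restrictScalars_mem] at *
      exact Ideal.mul_mem_left _ _ hu)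

lemma zmap_mk (q m : ℕ) (p g : k[X]) :
    zmap k f α q m p (mkW k f α q m g) = mkW k f α q m (p * g) := by
  simp [zmap, mkW, Submodule.mapQ_apply, LinearMap.mulLeft_apply]

/-- the `y`-component map `W_m → W_{m+1}`, induced by `σ`. -/
def ymap (q m : ℕ) : Wq k f α q m →ₗ[k] Wq k f α q (m+1) :=
  Submodule.mapQ _ _ (sA k).toLinearMap
    (fun u hu => by
      simp only [Submodule.mem_comap, Submodule.restrictScalars_mem] at *
      exact sigma_mem_Idl k f α hu)

lemma ymap_mk (q m : ℕ) (g : k[X]) :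
    ymap k f α q m (mkW k f α q m g) = mkW k f α q (m+1) (σA g) := by
  simp [ymap, mkW, Submodule.mapQ_apply]

/-- the `x`-component map `W_{m+1} → W_m`, `g ↦ σ⁻¹(f·g)`. -/
def xmap (q m : ℕ) : Wq k f α q (m+1) →ₗ[k] Wq k f α q m :=
  Submodule.mapQ _ _ ((sA k).symm.toLinearMap ∘ₗ LinearMap.mulLeft k f)
    (fun u hu => by
      simp only [Submodule.mem_comap, Submodule.restrictScalars_mem] at *
      exact sigma_symm_mem_Idl k f α (Ideal.mul_mem_left _ f hu))

lemma xmap_mk (q m : ℕ) (g : k[X]) :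
    xmap k f α q m (mkW k f α q (m+1) g) = mkW k f α q m ((sA k).symm (f * g)) := by
  simp [xmap, mkW, Submodule.mapQ_apply]

/-- action of `r p` on `V`. -/
def ZAct (q : ℕ) (p : k[X]) : Vq k f α q →ₗ[k] Vq k f α q :=
  DFinsupp.mapRange.linearMap (fun m => zmap k f α q m p)

lemma ZAct_single (q m : ℕ) (p g : k[X]) :
    ZAct k f α q p (DFinsupp.single m (mkW k f α q m g))
      = DFinsupp.single m (mkW k f α q m (p * g)) := by
  classical
  rw [ZAct, DFinsupp.mapRange.linearMap_apply, DFinsupp.mapRange_single, zmap_mk]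

/-- action of `y` on `V`. -/
def YAct (q : ℕ) : Vq k f α q →ₗ[k] Vq k f α q :=
  DFinsupp.lsum ℕ (M := fun m => Wq k f α q m)
    (fun m => (DFinsupp.lsingle (m+1)).comp (ymap k f α q m))

lemma YAct_single (q m : ℕ) (x : Wq k f α q m) :
    YAct k f α q (DFinsupp.single m x) = DFinsupp.single (m+1) (ymap k f α q m x) := by
  classical
  rw [YAct, DFinsupp.lsum_single]; rfl

/-- components of the action of `x`. -/
def xcomp (q : ℕ) : ∀ m, Wq k f α q m →ₗ[k] Vq k f α q
  | 0 => 0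
  | (m+1) => (DFinsupp.lsingle m).comp (xmap k f α q m)

/-- action of `x` on `V`. -/
def XAct (q : ℕ) : Vq k f α q →ₗ[k] Vq k f α q :=
  DFinsupp.lsum ℕ (M := fun m => Wq k f α q m) (xcomp k f α q)

lemma XAct_single_zero (q : ℕ) (x : Wq k f α q 0) :
    XAct k f α q (DFinsupp.single 0 x) = 0 := by
  classical
  rw [XAct, DFinsupp.lsum_single]; rfl

lemma XAct_single_succ (q m : ℕ) (x : Wq k f α q (m+1)) :
    XAct k f α q (DFinsupp.single (m+1) x) = DFinsupp.single m (xmap k f α q m x) := by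
  classical
  rw [XAct, DFinsupp.lsum_single]; rfl


lemma f_mem_Idl_zero (q : ℕ) : f ∈ Idl k f α q 0 :=
  (mem_Idl_iff k f α).2 ⟨0, 1, by simp⟩

lemma mkW_f_mul (q : ℕ) (g : k[X]) : mkW k f α q 0 (f * g) = 0 := by
  rw [Submodule.Quotient.mk_eq_zero]
  exact Ideal.mul_mem_right g _ (f_mem_Idl_zero k f α q)

/-- The endomorphism algebra in which the representation lands. -/
abbrev EV (q : ℕ) : Type := (Module.End k (Vq k f α q))ᵐᵒᵖ

/-- images of the generators. -/
def gens (q : ℕ) : GWAgen k[X] → EV k f α q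
  | .r p => op (ZAct k f α q p)
  | .x => op (XAct k f α q)
  | .y => op (YAct k f α q)

/-- the representation on the free algebra. -/
def Fq (q : ℕ) : FreeAlgebra k (GWAgen k[X]) →ₐ[k] EV k f α q :=
  FreeAlgebra.lift k (gens k f α q)

lemma YX_eq (q : ℕ) : YAct k f α q ∘ₗ XAct k f α q = ZAct k f α q f := by
  classical
  apply DFinsupp.lhom_ext
  intro m x
  obtain ⟨g, rfl⟩ := Submodule.Quotient.mk_surjective _ x
  cases m with
  | zero =>
    rw [LinearMap.comp_apply, XAct_single_zero, map_zero, ZAct_single, mkW_f_mul,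
      DFinsupp.single_zero]
  | succ m =>
    rw [LinearMap.comp_apply, XAct_single_succ, xmap_mk, YAct_single, ymap_mk,
      AlgEquiv.apply_symm_apply, ZAct_single]

lemma XY_eq (q : ℕ) :
    XAct k f α q ∘ₗ YAct k f α q = ZAct k f α q ((sA k).symm f) := by
  classical
  apply DFinsupp.lhom_ext
  intro m x
  obtain ⟨g, rfl⟩ := Submodule.Quotient.mk_surjective _ x
  rw [LinearMap.comp_apply, YAct_single, ymap_mk, XAct_single_succ, xmap_mk, ZAct_single,
    map_mul, AlgEquiv.symm_apply_apply]

lemma ZX_eq (q : ℕ) (p : k[X]) :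
    ZAct k f α q p ∘ₗ XAct k f α q = XAct k f α q ∘ₗ ZAct k f α q (sA k p) := by
  classical
  apply DFinsupp.lhom_ext
  intro m x
  obtain ⟨g, rfl⟩ := Submodule.Quotient.mk_surjective _ x
  cases m with
  | zero =>
    rw [LinearMap.comp_apply, LinearMap.comp_apply, XAct_single_zero, map_zero, ZAct_single,
      XAct_single_zero]
  | succ m =>
    rw [LinearMap.comp_apply, LinearMap.comp_apply, XAct_single_succ, xmap_mk, ZAct_single,
      ZAct_single, XAct_single_succ, xmap_mk]
    congr 1
    simp only [mkW, map_mul, AlgEquiv.symm_apply_apply]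
    congr 1
    ring

lemma ZY_eq (q : ℕ) (p : k[X]) :
    ZAct k f α q p ∘ₗ YAct k f α q = YAct k f α q ∘ₗ ZAct k f α q ((sA k).symm p) := by
  classical
  apply DFinsupp.lhom_ext
  intro m x
  obtain ⟨g, rfl⟩ := Submodule.Quotient.mk_surjective _ x
  rw [LinearMap.comp_apply, LinearMap.comp_apply, YAct_single, ymap_mk, ZAct_single,
    ZAct_single, YAct_single, ymap_mk, map_mul, AlgEquiv.apply_symm_apply]

lemma ZZ_eq (q : ℕ) (p p' : k[X]) :
    ZAct k f α q p' ∘ₗ ZAct k f α q p = ZAct k f α q (p * p') := by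
  classical
  apply DFinsupp.lhom_ext
  intro m x
  obtain ⟨g, rfl⟩ := Submodule.Quotient.mk_surjective _ x
  rw [LinearMap.comp_apply, ZAct_single, ZAct_single, ZAct_single]
  congr 1
  ring_nf

lemma ZAct_add (q : ℕ) (p p' : k[X]) :
    ZAct k f α q (p + p') = ZAct k f α q p + ZAct k f α q p' := by
  classical
  apply DFinsupp.lhom_ext
  intro m x
  obtain ⟨g, rfl⟩ := Submodule.Quotient.mk_surjective _ x
  rw [LinearMap.add_apply, ZAct_single, ZAct_single, ZAct_single, ← DFinsupp.single_add]
  congr 1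
  rw [← Submodule.Quotient.mk_add]
  congr 1
  ring

lemma ZAct_algebraMap (q : ℕ) (c : k) :
    ZAct k f α q (algebraMap k k[X] c) = algebraMap k (Module.End k (Vq k f α q)) c := by
  classical
  apply DFinsupp.lhom_ext
  intro m x
  obtain ⟨g, rfl⟩ := Submodule.Quotient.mk_surjective _ x
  rw [ZAct_single, Module.algebraMap_end_apply, ← DFinsupp.single_smul]
  congr 1
  rw [mkW, ← Submodule.Quotient.mk_smul]
  congr 1
  rw [Algebra.smul_def]

lemma Fq_rel (q : ℕ) : ∀ ⦃a b : FreeAlgebra k (GWAgen k[X])⦄,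
    GWArel k k[X] (sA k) f a b → Fq k f α q a = Fq k f α q b := by
  intro a b h
  induction h with
  | add a b =>
    simp only [Fq, map_add, FreeAlgebra.lift_ι_apply, gens]
    rw [ZAct_add k f α q a b]
    rfl
  | mul a b =>
    simp only [Fq, map_mul, FreeAlgebra.lift_ι_apply, gens]
    rw [← op_mul, Module.End.mul_eq_comp, ZZ_eq]
  | alg c =>
    simp only [Fq, FreeAlgebra.lift_ι_apply, gens, AlgHom.commutes]
    rw [ZAct_algebraMap]
    rfl
  | xy =>
    simp only [Fq, map_mul, FreeAlgebra.lift_ι_apply, gens]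
    rw [← op_mul, Module.End.mul_eq_comp, YX_eq]
  | yx =>
    simp only [Fq, map_mul, FreeAlgebra.lift_ι_apply, gens]
    rw [← op_mul, Module.End.mul_eq_comp, XY_eq]
  | xr a =>
    simp only [Fq, map_mul, FreeAlgebra.lift_ι_apply, gens]
    rw [← op_mul, ← op_mul, Module.End.mul_eq_comp, Module.End.mul_eq_comp, ZX_eq]
  | yr a =>
    simp only [Fq, map_mul, FreeAlgebra.lift_ι_apply, gens]
    rw [← op_mul, ← op_mul, Module.End.mul_eq_comp, Module.End.mul_eq_comp, ZY_eq]


/-- The representation of `A` on `V`. -/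
def Phi (q : ℕ) : Ak →ₐ[k] EV k f α q :=
  RingQuot.liftAlgHom k ⟨Fq k f α q, Fq_rel k f α q⟩

/-- The (right) action of `a ∈ A` on `V`. -/
def act (q : ℕ) (a : Ak) : Vq k f α q →ₗ[k] Vq k f α q := (Phi k f α q a).unop

lemma act_mk (q : ℕ) (w : FreeAlgebra k (GWAgen k[X])) :
    act k f α q (RingQuot.mkAlgHom k (GWArel k k[X] (sA k) f) w) = (Fq k f α q w).unop := by
  rw [act, Phi, RingQuot.liftAlgHom_mkAlgHom_apply]

lemma act_rr (q : ℕ) (p : k[X]) : act k f α q (rr p) = ZAct k f α q p := by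
  rw [show (rr p : Ak) = RingQuot.mkAlgHom k (GWArel k k[X] (sA k) f)
    (FreeAlgebra.ι k (.r p)) from rfl, act_mk, Fq, FreeAlgebra.lift_ι_apply]
  rfl

lemma act_X (q : ℕ) : act k f α q XX = XAct k f α q := by
  rw [GWA.X, act_mk, Fq, FreeAlgebra.lift_ι_apply]
  rfl

lemma act_Y (q : ℕ) : act k f α q YY = YAct k f α q := by
  rw [GWA.Y, act_mk, Fq, FreeAlgebra.lift_ι_apply]
  rfl

lemma act_mul (q : ℕ) (a b : Ak) :
    act k f α q (a * b) = (act k f α q b) ∘ₗ (act k f α q a) := by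
  rw [act, act, act, map_mul, ← Module.End.mul_eq_comp]
  rfl

lemma act_one (q : ℕ) : act k f α q 1 = LinearMap.id := by
  rw [act, map_one]
  rfl

lemma act_add (q : ℕ) (a b : Ak) :
    act k f α q (a + b) = act k f α q a + act k f α q b := by
  rw [act, act, act, map_add]
  rfl

lemma act_smul (q : ℕ) (c : k) (a : Ak) :
    act k f α q (c • a) = c • act k f α q a := by
  rw [act, act, map_smul]
  rfl

lemma act_algebraMap (q : ℕ) (c : k) :
    act k f α q (algebraMap k Ak c) = c • (LinearMap.id : Vq k f α q →ₗ[k] Vq k f α q) := by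
  rw [act, AlgHom.commutes]
  show (algebraMap k (Module.End k (Vq k f α q)) c) = _
  rw [Module.algebraMap_end_eq_smul_id]

/-- The cyclic vector `[1] ∈ W_0`. -/
def v0 (q : ℕ) : Vq k f α q := DFinsupp.single 0 (mkW k f α q 0 1)

/-- The evaluation map `ψ : A → V`, `a ↦ v₀ · a`. -/
def psi (q : ℕ) : Ak →ₗ[k] Vq k f α q where
  toFun a := act k f α q a (v0 k f α q)
  map_add' a b := by rw [act_add]; rfl
  map_smul' c a := by simp only [RingHom.id_apply]; rw [act_smul]; rfl

lemma psi_apply (q : ℕ) (a : Ak) : psi k f α q a = act k f α q a (v0 k f α q) := rfl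

lemma psi_mul (q : ℕ) (a b : Ak) :
    psi k f α q (a * b) = act k f α q b (psi k f α q a) := by
  rw [psi_apply, act_mul]
  rfl

lemma psi_Ypow (q m : ℕ) : psi k f α q (YY ^ m) = DFinsupp.single m (mkW k f α q m 1) := by
  induction m with
  | zero =>
    rw [pow_zero, psi_apply, act_one]
    rfl
  | succ m ih =>
    rw [pow_succ, psi_mul, ih, act_Y, YAct_single, ymap_mk, map_one]

lemma psi_Ypow_r (q m : ℕ) (p : k[X]) :
    psi k f α q (YY ^ m * rr p) = DFinsupp.single m (mkW k f α q m p) := by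
  rw [psi_mul, psi_Ypow, act_rr, ZAct_single, mul_one]

lemma psi_X (q : ℕ) : psi k f α q XX = 0 := by
  rw [show (XX : Ak) = 1 * XX by rw [one_mul], psi_mul, act_X]
  have h1 : psi k f α q 1 = DFinsupp.single 0 (mkW k f α q 0 1) := by
    simpa using psi_Ypow k f α q 0
  rw [h1, XAct_single_zero]

lemma psi_rr (q : ℕ) (p : k[X]) :
    psi k f α q (rr p) = DFinsupp.single 0 (mkW k f α q 0 p) := by
  simpa using psi_Ypow_r k f α q 0 p


lemma rr_eq (p : k[X]) : rr p = GWA.r k k[X] (sA k) f p := rfl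

lemma mem_RI_iff {q : ℕ} {a : Ak} :
    a ∈ rightIdealM k f α q ↔ ∃ u v : Ak, rr ((X - C α) ^ q) * u + XX * v = a := by
  rw [rightIdealM, Submodule.mem_span_pair]
  constructor
  · rintro ⟨c, d, rfl⟩
    exact ⟨c.unop, d.unop, by
      rw [MulOpposite.smul_eq_mul_unop, MulOpposite.smul_eq_mul_unop, rr_eq]⟩
  · rintro ⟨u, v, rfl⟩
    exact ⟨op u, op v, by
      rw [MulOpposite.smul_eq_mul_unop, MulOpposite.smul_eq_mul_unop, rr_eq, unop_op, unop_op]⟩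

lemma RI_mul_mem {q : ℕ} {a : Ak} (h : a ∈ rightIdealM k f α q) (c : Ak) :
    a * c ∈ rightIdealM k f α q := by
  rw [show a * c = op c • a from rfl]
  exact Submodule.smul_mem _ _ h

lemma rr_pow_mem_RI (q : ℕ) : rr ((X - C α) ^ q) ∈ rightIdealM k f α q :=
  (mem_RI_iff k f α).2 ⟨1, 0, by rw [mul_one, mul_zero, add_zero]⟩

lemma X_mem_RI (q : ℕ) : XX ∈ rightIdealM k f α q :=
  (mem_RI_iff k f α).2 ⟨0, 1, by rw [mul_one, mul_zero, zero_add]⟩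

lemma pow_mem_Idl_zero (q : ℕ) : (X - C α) ^ q ∈ Idl k f α q 0 :=
  (mem_Idl_iff k f α).2 ⟨1, 0, by simp⟩

lemma psi_rr_pow (q : ℕ) : psi k f α q (rr ((X - C α) ^ q)) = 0 := by
  rw [psi_rr]
  have : mkW k f α q 0 ((X - C α) ^ q) = 0 := by
    rw [Submodule.Quotient.mk_eq_zero]
    exact pow_mem_Idl_zero k f α q
  rw [this, DFinsupp.single_zero]

lemma psi_RI_zero {q : ℕ} {a : Ak} (h : a ∈ rightIdealM k f α q) : psi k f α q a = 0 := by
  obtain ⟨u, v, rfl⟩ := (mem_RI_iff k f α).1 h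
  rw [map_add, psi_mul, psi_mul, psi_rr_pow, psi_X, map_zero, map_zero]
  exact add_zero (0 : Vq k f α q)

/-- the spanning set: `xA` together with all `y^m r(p)`. -/
def SpSet : Set Ak :=
  {a | ∃ b, a = XX * b} ∪ {a | ∃ m p, a = YY ^ m * rr p}

lemma T_mul_r {a : Ak} (h : a ∈ Submodule.span k (SpSet k f)) (p : k[X]) :
    a * rr p ∈ Submodule.span k (SpSet k f) := by
  induction h using Submodule.span_induction with
  | mem a ha =>
    apply Submodule.subset_span
    rcases ha with ⟨b, rfl⟩ | ⟨m, p', rfl⟩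
    · exact Or.inl ⟨b * rr p, by rw [mul_assoc]⟩
    · exact Or.inr ⟨m, p' * p, by rw [map_mul, mul_assoc]⟩
  | zero => rw [zero_mul]; exact Submodule.zero_mem _
  | add x y hx hy ihx ihy => rw [add_mul]; exact Submodule.add_mem _ ihx ihy
  | smul c x hx ih => rw [smul_mul_assoc]; exact Submodule.smul_mem _ _ ih

lemma T_mul_X {a : Ak} (h : a ∈ Submodule.span k (SpSet k f)) :
    a * XX ∈ Submodule.span k (SpSet k f) := by
  induction h using Submodule.span_induction with
  | mem a ha =>
    apply Submodule.subset_span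
    rcases ha with ⟨b, rfl⟩ | ⟨m, p, rfl⟩
    · exact Or.inl ⟨b * XX, by rw [mul_assoc]⟩
    · cases m with
      | zero =>
        refine Or.inl ⟨rr ((sA k).symm p), ?_⟩
        rw [pow_zero, one_mul, r_mul_X]
      | succ m =>
        refine Or.inr ⟨m, (sA k).symm (f * p), ?_⟩
        rw [mul_assoc, r_mul_X, pow_succ, mul_assoc, ← mul_assoc (GWA.Y k k[X] (sA k) f),
          Y_mul_X, map_mul, ← mul_assoc, ← map_mul]
        rw [mul_assoc, ← map_mul, map_mul ((sA k).symm) f p]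
  | zero => rw [zero_mul]; exact Submodule.zero_mem _
  | add x y hx hy ihx ihy => rw [add_mul]; exact Submodule.add_mem _ ihx ihy
  | smul c x hx ih => rw [smul_mul_assoc]; exact Submodule.smul_mem _ _ ih

lemma T_mul_Y {a : Ak} (h : a ∈ Submodule.span k (SpSet k f)) :
    a * YY ∈ Submodule.span k (SpSet k f) := by
  induction h using Submodule.span_induction with
  | mem a ha =>
    apply Submodule.subset_span
    rcases ha with ⟨b, rfl⟩ | ⟨m, p, rfl⟩
    · exact Or.inl ⟨b * YY, by rw [mul_assoc]⟩
    · refine Or.inr ⟨m + 1, sA k p, ?_⟩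
      rw [mul_assoc, r_mul_Y, pow_succ, mul_assoc]
  | zero => rw [zero_mul]; exact Submodule.zero_mem _
  | add x y hx hy ihx ihy => rw [add_mul]; exact Submodule.add_mem _ ihx ihy
  | smul c x hx ih => rw [smul_mul_assoc]; exact Submodule.smul_mem _ _ ih

lemma one_mem_T : (1 : Ak) ∈ Submodule.span k (SpSet k f) := by
  apply Submodule.subset_span
  exact Or.inr ⟨0, 1, by rw [pow_zero, map_one, one_mul]⟩

lemma mem_T (a : Ak) : a ∈ Submodule.span k (SpSet k f) := by
  have key : ∀ w : FreeAlgebra k (GWAgen k[X]), ∀ t ∈ Submodule.span k (SpSet k f),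
      t * RingQuot.mkAlgHom k (GWArel k k[X] (sA k) f) w ∈ Submodule.span k (SpSet k f) := by
    intro w
    induction w using FreeAlgebra.induction with
    | grade0 c =>
      intro t ht
      rw [AlgHom.commutes, ← Algebra.commutes, ← Algebra.smul_def]
      exact Submodule.smul_mem _ _ ht
    | grade1 g =>
      cases g with
      | r p => intro t ht; exact T_mul_r k f ht p
      | x => intro t ht; exact T_mul_X k f ht
      | y => intro t ht; exact T_mul_Y k f ht
    | mul u v ihu ihv =>
      intro t ht
      rw [map_mul, ← mul_assoc]
      exact ihv _ (ihu _ ht)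
    | add u v ihu ihv =>
      intro t ht
      rw [map_add, mul_add]
      exact Submodule.add_mem _ (ihu _ ht) (ihv _ ht)
  obtain ⟨w, rfl⟩ := RingQuot.mkAlgHom_surjective k (GWArel k k[X] (sA k) f) a
  simpa using key w 1 (one_mem_T k f)


/-- `κ d = ∑ y^m r(dₘ)`. -/
def kap (d : ℕ →₀ k[X]) : Ak := d.sum fun m p => YY ^ m * rr p

lemma kap_zero : kap k f (0 : ℕ →₀ k[X]) = 0 := Finsupp.sum_zero_index

lemma kap_single (m : ℕ) (p : k[X]) :
    kap k f (Finsupp.single m p) = YY ^ m * rr p := by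
  rw [kap, Finsupp.sum_single_index]
  rw [map_zero, mul_zero]

lemma kap_add (d d' : ℕ →₀ k[X]) : kap k f (d + d') = kap k f d + kap k f d' := by
  rw [kap, kap, kap]
  exact Finsupp.sum_add_index' (fun m => by rw [map_zero, mul_zero])
    (fun m p p' => by rw [map_add, mul_add])

lemma kap_smul (c : k) (d : ℕ →₀ k[X]) : kap k f (c • d) = c • kap k f d := by
  rw [kap, kap, Finsupp.sum_smul_index' (h0 := fun m => by rw [map_zero, mul_zero]),
    Finsupp.smul_sum]
  exact Finsupp.sum_congr fun i _ => by rw [map_smul, mul_smul_comm]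

lemma decomp (a : Ak) : ∃ (b : Ak) (d : ℕ →₀ k[X]), a = XX * b + kap k f d := by
  induction mem_T k f a using Submodule.span_induction with
  | mem x hx =>
    rcases hx with ⟨b, rfl⟩ | ⟨m, p, rfl⟩
    · exact ⟨b, 0, by rw [kap_zero, add_zero]⟩
    · exact ⟨0, Finsupp.single m p, by rw [kap_single, mul_zero, zero_add]⟩
  | zero => exact ⟨0, 0, by rw [kap_zero, mul_zero, add_zero]⟩
  | add x y hx hy ihx ihy =>
    obtain ⟨b, d, rfl⟩ := ihx
    obtain ⟨b', d', rfl⟩ := ihy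
    exact ⟨b + b', d + d', by rw [mul_add, kap_add]; abel⟩
  | smul c x hx ih =>
    obtain ⟨b, d, rfl⟩ := ih
    exact ⟨c • b, c • d, by rw [kap_smul, smul_add, mul_smul_comm]⟩

lemma psi_kap_apply (q : ℕ) (d : ℕ →₀ k[X]) (m₀ : ℕ) :
    psi k f α q (kap k f d) m₀ = mkW k f α q m₀ (d m₀) := by
  classical
  induction d using Finsupp.induction_linear with
  | zero => rw [kap_zero, map_zero]; rfl
  | add d d' ihd ihd' =>
    rw [kap_add, map_add, DFinsupp.add_apply, ihd, ihd', Finsupp.add_apply]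
    exact (Submodule.Quotient.mk_add _).symm
  | single m p =>
    rw [kap_single, psi_Ypow_r]
    by_cases hm : m = m₀
    · subst hm
      rw [DFinsupp.single_eq_same, Finsupp.single_eq_same]
    · rw [DFinsupp.single_eq_of_ne (Ne.symm hm), Finsupp.single_eq_of_ne (Ne.symm hm), mkW,
        Submodule.Quotient.mk_zero]

lemma Ypow_r_mem_RI {q m : ℕ} {p : k[X]} (hp : p ∈ Idl k f α q m) :
    YY ^ m * rr p ∈ rightIdealM k f α q := by
  obtain ⟨v, w, rfl⟩ := (mem_Idl_iff k f α).1 hp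
  rw [show v * (σA ^ m) ((X - C α) ^ q) + w * (σA ^ m) f
      = (σA ^ m) ((X - C α) ^ q) * v + (σA ^ m) f * w by ring, map_add, mul_add,
    map_mul, map_mul, ← mul_assoc, ← mul_assoc, ← r_mul_Ypow, ← r_mul_Ypow]
  apply Submodule.add_mem
  · exact RI_mul_mem k f α (RI_mul_mem k f α (rr_pow_mem_RI k f α q) _) _
  · rw [← X_mul_Y]
    exact RI_mul_mem k f α (RI_mul_mem k f α (RI_mul_mem k f α (X_mem_RI k f α q) _) _) _

lemma ker_psi_le (q : ℕ) {a : Ak} (h : psi k f α q a = 0) : a ∈ rightIdealM k f α q := by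
  obtain ⟨b, d, rfl⟩ := decomp k f a
  have hXb : XX * b ∈ rightIdealM k f α q := RI_mul_mem k f α (X_mem_RI k f α q) b
  have h2 : psi k f α q (kap k f d) = 0 := by
    rw [map_add, psi_RI_zero k f α hXb] at h
    rw [← zero_add ((psi k f α q) (kap k f d))]
    exact h
  have hd : ∀ m, d m ∈ Idl k f α q m := by
    intro m
    have := psi_kap_apply k f α q d m
    rw [h2] at this
    have h0 : mkW k f α q m (d m) = 0 := this.symm
    rw [Submodule.Quotient.mk_eq_zero, Submodule.restrictScalars_mem] at h0
    exact h0
  refine Submodule.add_mem _ hXb ?_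
  rw [kap, Finsupp.sum]
  exact Submodule.sum_mem _ (fun m _ => Ypow_r_mem_RI k f α (hd m))


lemma sigma_symm_pow_succ (m : ℕ) (u : k[X]) :
    (sA k).symm ((σA ^ (m+1)) u) = (σA ^ m) u := by
  rw [sigma_pow_succ_apply, AlgEquiv.symm_apply_apply]

lemma poly_step (s : ℕ) (hn : s + 1 ≤ f.rootMultiplicity α) (m : ℕ) {g : k[X]}
    (hg : (σA ^ m) ((X - C α) ^ s) * g ∈ Idl k f α (s+1) m) : g ∈ Idl k f α 1 m := by
  obtain ⟨v, w, hvw⟩ := (mem_Idl_iff k f α).1 hg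
  obtain ⟨h, hh⟩ := Polynomial.pow_rootMultiplicity_dvd f α
  set z : k[X] := (σA ^ m) (X - C α) with hz
  have hzq : ∀ q : ℕ, (σA ^ m) ((X - C α) ^ q) = z ^ q := fun q => by rw [hz, map_pow]
  have hzne : z ≠ 0 := fun h0 => Polynomial.X_sub_C_ne_zero α ((σA ^ m).injective
    (h0.trans (map_zero _).symm))
  set e : ℕ := f.rootMultiplicity α - (s + 1) with he
  have hne : f.rootMultiplicity α = s + 1 + e := by omega
  have hfm : (σA ^ m) f = z ^ (s + 1 + e) * (σA ^ m) h := by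
    rw [hh, hne, map_mul, hzq]
  rw [hzq, hzq, hfm] at hvw
  have key : z ^ s * g = z ^ s * ((v + w * (z ^ e * (σA ^ m) h)) * z) := by
    rw [← hvw]
    ring
  have hg' : g = (v + w * (z ^ e * (σA ^ m) h)) * z :=
    mul_left_cancel₀ (pow_ne_zero s hzne) key
  refine (mem_Idl_iff k f α).2 ⟨v + w * (z ^ e * (σA ^ m) h), 0, ?_⟩
  rw [zero_mul, add_zero, hzq, pow_one, ← hg']

/-- multiplication by `(z+m-α)^s`, as a map `W^{(1)}_m → W^{(s+1)}_m`. -/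
def thm (s m : ℕ) : Wq k f α 1 m →ₗ[k] Wq k f α (s+1) m :=
  Submodule.mapQ _ _ (LinearMap.mulLeft k ((σA ^ m) ((X - C α) ^ s)))
    (fun u hu => by
      simp only [Submodule.mem_comap, Submodule.restrictScalars_mem,
        LinearMap.mulLeft_apply] at *
      obtain ⟨v, w, rfl⟩ := (mem_Idl_iff k f α).1 hu
      refine (mem_Idl_iff k f α).2 ⟨v, (σA ^ m) ((X - C α) ^ s) * w, ?_⟩
      have key : (σA ^ m) ((X - C α) ^ s) * (σA ^ m) ((X - C α) ^ 1)
          = (σA ^ m) ((X - C α) ^ (s+1)) := by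
        rw [← map_mul, ← pow_add]
      rw [← key]
      ring)

lemma thm_mk (s m : ℕ) (g : k[X]) :
    thm k f α s m (mkW k f α 1 m g) = mkW k f α (s+1) m ((σA ^ m) ((X - C α) ^ s) * g) := by
  rw [thm, mkW, mkW, Submodule.mapQ_apply, LinearMap.mulLeft_apply]

/-- the embedding `θ : V^{(1)} → V^{(s+1)}`. -/
def theta (s : ℕ) : Vq k f α 1 →ₗ[k] Vq k f α (s+1) :=
  DFinsupp.mapRange.linearMap (thm k f α s)

lemma theta_single (s m : ℕ) (x : Wq k f α 1 m) :
    theta k f α s (DFinsupp.single m x) = DFinsupp.single m (thm k f α s m x) := by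
  classical
  rw [theta, DFinsupp.mapRange.linearMap_apply, DFinsupp.mapRange_single]

lemma theta_inj (s : ℕ) (hn : s + 1 ≤ f.rootMultiplicity α) :
    Function.Injective (theta k f α s) := by
  classical
  have hcomp : ∀ (m : ℕ) (x : Wq k f α 1 m), thm k f α s m x = 0 → x = 0 := by
    intro m x hx
    obtain ⟨g, rfl⟩ := Submodule.Quotient.mk_surjective _ x
    rw [thm_mk, Submodule.Quotient.mk_eq_zero, Submodule.restrictScalars_mem] at hx
    rw [show (Submodule.Quotient.mk g : Wq k f α 1 m) = mkW k f α 1 m g from rfl,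
      Submodule.Quotient.mk_eq_zero, Submodule.restrictScalars_mem]
    exact poly_step k f α s hn m hx
  intro v v' h
  ext m
  have hm : theta k f α s v m = theta k f α s v' m := by rw [h]
  rw [theta, DFinsupp.mapRange.linearMap_apply, DFinsupp.mapRange_apply,
    DFinsupp.mapRange.linearMap_apply, DFinsupp.mapRange_apply] at hm
  have := hcomp m (v m - v' m) (by rw [map_sub, hm, sub_self])
  exact sub_eq_zero.1 this

lemma theta_Z (s : ℕ) (p : k[X]) :
    theta k f α s ∘ₗ ZAct k f α 1 p = ZAct k f α (s+1) p ∘ₗ theta k f α s := by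
  classical
  apply DFinsupp.lhom_ext
  intro m x
  obtain ⟨g, rfl⟩ := Submodule.Quotient.mk_surjective _ x
  rw [LinearMap.comp_apply, LinearMap.comp_apply, ZAct_single, theta_single, thm_mk,
    theta_single, thm_mk, ZAct_single]
  congr 1
  rw [mkW]
  congr 1
  ring

lemma theta_Y (s : ℕ) :
    theta k f α s ∘ₗ YAct k f α 1 = YAct k f α (s+1) ∘ₗ theta k f α s := by
  classical
  apply DFinsupp.lhom_ext
  intro m x
  obtain ⟨g, rfl⟩ := Submodule.Quotient.mk_surjective _ x
  rw [LinearMap.comp_apply, LinearMap.comp_apply, YAct_single, ymap_mk, theta_single, thm_mk,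
    theta_single, thm_mk, YAct_single, ymap_mk]
  congr 1
  rw [mkW]
  congr 1
  rw [map_mul, sigma_pow_succ_apply]

lemma theta_X (s : ℕ) :
    theta k f α s ∘ₗ XAct k f α 1 = XAct k f α (s+1) ∘ₗ theta k f α s := by
  classical
  apply DFinsupp.lhom_ext
  intro m x
  obtain ⟨g, rfl⟩ := Submodule.Quotient.mk_surjective _ x
  cases m with
  | zero =>
    rw [LinearMap.comp_apply, LinearMap.comp_apply, XAct_single_zero, map_zero, theta_single,
      XAct_single_zero]
  | succ m =>
    rw [LinearMap.comp_apply, LinearMap.comp_apply, XAct_single_succ, xmap_mk, theta_single,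
      thm_mk, theta_single, thm_mk, XAct_single_succ, xmap_mk]
    congr 1
    rw [mkW]
    congr 1
    rw [show f * ((σA ^ (m+1)) ((X - C α) ^ s) * g) = (σA ^ (m+1)) ((X - C α) ^ s) * (f * g)
      by ring, map_mul ((sA k).symm), map_mul ((sA k).symm), sigma_symm_pow_succ,
      map_mul ((sA k).symm) f g]

lemma theta_equivariant (s : ℕ) (a : Ak) :
    theta k f α s ∘ₗ act k f α 1 a = act k f α (s+1) a ∘ₗ theta k f α s := by
  obtain ⟨w, rfl⟩ := RingQuot.mkAlgHom_surjective k (GWArel k k[X] (sA k) f) a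
  induction w using FreeAlgebra.induction with
  | grade0 c =>
    rw [AlgHom.commutes, act_algebraMap, act_algebraMap]
    ext v
    simp
  | grade1 g =>
    cases g with
    | r p =>
      rw [show RingQuot.mkAlgHom k (GWArel k k[X] (sA k) f) (FreeAlgebra.ι k (GWAgen.r p))
        = rr p from rfl, act_rr, act_rr, theta_Z]
    | x =>
      rw [show RingQuot.mkAlgHom k (GWArel k k[X] (sA k) f) (FreeAlgebra.ι k GWAgen.x)
        = XX from rfl, act_X, act_X, theta_X]
    | y =>
      rw [show RingQuot.mkAlgHom k (GWArel k k[X] (sA k) f) (FreeAlgebra.ι k GWAgen.y)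
        = YY from rfl, act_Y, act_Y, theta_Y]
  | mul u v ihu ihv =>
    rw [map_mul, act_mul, act_mul, ← LinearMap.comp_assoc, ihv, LinearMap.comp_assoc, ihu,
      ← LinearMap.comp_assoc]
  | add u v ihu ihv =>
    rw [map_add, act_add, act_add, LinearMap.add_comp, LinearMap.comp_add, ihu, ihv]

lemma theta_v0 (s : ℕ) :
    theta k f α s (v0 k f α 1) = psi k f α (s+1) (rr ((X - C α) ^ s)) := by
  rw [psi_rr, v0, theta_single, thm_mk, mul_one, pow_zero, AlgEquiv.one_apply]

/-- The key step: if `(z-α)^s a ∈ (z-α)^{s+1} A + xA` then `a ∈ (z-α)A + xA`. -/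
lemma ker_step (s : ℕ) (hn : s + 1 ≤ f.rootMultiplicity α) {a : Ak}
    (h : rr ((X - C α) ^ s) * a ∈ rightIdealM k f α (s+1)) :
    a ∈ rightIdealM k f α 1 := by
  apply ker_psi_le
  apply theta_inj k f α s hn
  rw [map_zero]
  have h1 : theta k f α s (psi k f α 1 a)
      = act k f α (s+1) a (theta k f α s (v0 k f α 1)) := by
    rw [psi_apply]
    exact LinearMap.congr_fun (theta_equivariant k f α s a) (v0 k f α 1)
  rw [h1, theta_v0, ← psi_mul, psi_RI_zero k f α h]


lemma RI_antitone {a b : ℕ} (h : b ≤ a) :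
    rightIdealM k f α a ≤ rightIdealM k f α b := by
  rw [rightIdealM, Submodule.span_le]
  rintro x hx
  rcases Set.mem_insert_iff.1 hx with rfl | hx
  · rw [← rr_eq, show a = b + (a - b) by omega, pow_add, map_mul]
    exact RI_mul_mem k f α (rr_pow_mem_RI k f α b) _
  · rw [Set.mem_singleton_iff] at hx
    subst hx
    exact X_mem_RI k f α b

lemma RI_zero : rightIdealM k f α 0 = ⊤ := by
  rw [eq_top_iff]
  intro a _
  refine (mem_RI_iff k f α).2 ⟨a, 0, ?_⟩
  rw [pow_zero, map_one, one_mul, mul_zero, add_zero]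

lemma mem_map_mkQ_iff {R M : Type*} [Ring R] [AddCommGroup M] [Module R M]
    {N P : Submodule R M} (h : N ≤ P) (b : M) :
    N.mkQ b ∈ Submodule.map N.mkQ P ↔ b ∈ P := by
  constructor
  · rintro ⟨p, hp, hpb⟩
    have hd : p - b ∈ N := by
      rw [← Submodule.Quotient.eq]
      rw [Submodule.mkQ_apply, Submodule.mkQ_apply] at hpb
      exact hpb
    have := P.sub_mem hp (h hd)
    simpa using this
  · exact fun hb => Submodule.mem_map_of_mem hb

lemma quotient_iso (j s : ℕ) (hsle : s + 1 ≤ f.rootMultiplicity α) (hj : s + 1 ≤ j) :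
    Nonempty
      ((↥(Submodule.map (rightIdealM k f α j).mkQ (rightIdealM k f α s)) ⧸
          Submodule.comap
            (Submodule.map (rightIdealM k f α j).mkQ (rightIdealM k f α s)).subtype
            (Submodule.map (rightIdealM k f α j).mkQ (rightIdealM k f α (s+1))))
        ≃ₗ[(GWAk k f)ᵐᵒᵖ] Mminus k f α 1) := by
  classical
  set N := rightIdealM k f α j with hN
  set cS := Submodule.map N.mkQ (rightIdealM k f α s) with hcS
  set cC := Submodule.map N.mkQ (rightIdealM k f α (s+1)) with hcC
  set G : Ak := rr ((X - C α) ^ s) with hG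
  let L : Ak →ₗ[Akᵐᵒᵖ] Ak :=
    { toFun := fun a => G * a
      map_add' := fun a b => mul_add G a b
      map_smul' := fun c a => by
        simp only [RingHom.id_apply, MulOpposite.smul_eq_mul_unop]
        rw [← mul_assoc] }
  let Phit : Ak →ₗ[Akᵐᵒᵖ] Ak ⧸ N := N.mkQ ∘ₗ L
  have hPhit : ∀ a : Ak, Phit a = N.mkQ (G * a) := fun a => rfl
  have hmem : ∀ a : Ak, Phit a ∈ cS := fun a =>
    Submodule.mem_map_of_mem (RI_mul_mem k f α (rr_pow_mem_RI k f α s) a)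
  let Ψ : Ak →ₗ[Akᵐᵒᵖ] (↥cS ⧸ Submodule.comap cS.subtype cC) :=
    (Submodule.comap cS.subtype cC).mkQ ∘ₗ (LinearMap.codRestrict cS Phit hmem)
  have hNle : N ≤ rightIdealM k f α (s+1) := RI_antitone k f α hj
  have hker : LinearMap.ker Ψ = rightIdealM k f α 1 := by
    ext a
    rw [LinearMap.mem_ker]
    have h1 : Ψ a = 0 ↔ Phit a ∈ cC := by
      rw [show Ψ a = (Submodule.comap cS.subtype cC).mkQ
        (LinearMap.codRestrict cS Phit hmem a) from rfl, Submodule.mkQ_apply,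
        Submodule.Quotient.mk_eq_zero, Submodule.mem_comap]
      constructor
      · intro h
        rwa [Submodule.subtype_apply, LinearMap.codRestrict_apply] at h
      · intro h
        rwa [Submodule.subtype_apply, LinearMap.codRestrict_apply]
    rw [h1, hPhit, hcC, mem_map_mkQ_iff hNle]
    constructor
    · intro h
      exact ker_step k f α s hsle (by rwa [hG] at h)
    · intro h
      obtain ⟨u, v, rfl⟩ := (mem_RI_iff k f α).1 h
      rw [hG, mul_add, ← mul_assoc, ← map_mul, ← mul_assoc, r_mul_X, pow_one, ← pow_succ]
      apply Submodule.add_mem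
      · exact RI_mul_mem k f α (rr_pow_mem_RI k f α (s+1)) u
      · rw [mul_assoc]
        exact RI_mul_mem k f α (X_mem_RI k f α (s+1)) _
  have hsurj : Function.Surjective Ψ := by
    intro z
    obtain ⟨z', rfl⟩ := Submodule.Quotient.mk_surjective _ z
    obtain ⟨b, hb, hmkb⟩ := z'.2
    obtain ⟨u, v, rfl⟩ := (mem_RI_iff k f α).1 hb
    refine ⟨u, ?_⟩
    have hXv : N.mkQ (GWA.X k k[X] (sA k) f * v) = 0 := by
      rw [Submodule.mkQ_apply, Submodule.Quotient.mk_eq_zero]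
      exact RI_mul_mem k f α (X_mem_RI k f α j) v
    have hval : Phit u = z'.1 := by
      rw [hPhit, ← hmkb, map_add, hXv, add_zero, hG]
    have h2 : LinearMap.codRestrict cS Phit hmem u = z' :=
      Subtype.ext (by rw [LinearMap.codRestrict_apply]; exact hval)
    show (Submodule.comap cS.subtype cC).mkQ _ = _
    rw [h2]
    rfl
  exact ⟨((Submodule.quotEquivOfEq _ _ hker.symm).trans
    (Ψ.quotKerEquivOfSurjective hsurj)).symm⟩

end GWAP

end GWAProofAux

/-- Let `A = R(σ,f)` be a simple GWA (no two distinct roots of `f` are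
congruent) and `α` a root of `f` of multiplicity `n_α`. For `1 ≤ j ≤ n_α` the module
`M_α^{−j} = A/((z−α)^j A + xA)` has a filtration `0 = c 0 ≤ c 1 ≤ ⋯ ≤ c j = ⊤` of length
`j` whose successive quotients are all isomorphic to `M_α^{−} = A/((z−α)A + xA)`; in
particular `M_α^{−j}` has length `j`. -/
theorem Mminus_filtration (k : Type) [Field k] [IsAlgClosed k] [CharZero k]
    (f : k[X]) (hf : f.Monic)
    (hsimple : ∀ β γ : k, f.IsRoot β → f.IsRoot γ → (∃ t : ℤ, β = γ + t) → β = γ)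
    (α : k) (hα : f.IsRoot α) (j : ℕ) (hj1 : 1 ≤ j) (hj2 : j ≤ f.rootMultiplicity α) :
    ∃ c : Fin (j + 1) → Submodule (GWAk k f)ᵐᵒᵖ (Mminus k f α j),
      Monotone c ∧ c 0 = ⊥ ∧ c (Fin.last j) = ⊤ ∧
        ∀ t : Fin j,
          Nonempty
            ((↥(c t.succ) ⧸
                Submodule.comap (c t.succ).subtype (c t.castSucc)) ≃ₗ[(GWAk k f)ᵐᵒᵖ]
              Mminus k f α 1) := by
  classical
  refine ⟨fun i => Submodule.map (rightIdealM k f α j).mkQ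
      (rightIdealM k f α (j - (i : ℕ))), ?_, ?_, ?_, ?_⟩
  · intro i i' hii
    exact Submodule.map_mono (GWAP.RI_antitone k f α
      (Nat.sub_le_sub_left (Fin.le_def.1 hii) j))
  · simp only [Fin.val_zero, Nat.sub_zero]
    rw [eq_bot_iff]
    intro x hx
    rw [Submodule.mem_map] at hx
    obtain ⟨b, hb, rfl⟩ := hx
    rw [Submodule.mem_bot, Submodule.mkQ_apply, Submodule.Quotient.mk_eq_zero]
    exact hb
  · simp only [Fin.val_last, Nat.sub_self]
    rw [GWAP.RI_zero, Submodule.map_top, Submodule.range_mkQ]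
  · intro t
    have hts : (t : ℕ) < j := t.isLt
    simp only [Fin.val_succ, Fin.coe_castSucc]
    rw [show j - (t : ℕ) = (j - ((t : ℕ) + 1)) + 1 by omega]
    exact GWAP.quotient_iso k f α j (j - ((t : ℕ) + 1)) (by omega) (by omega)
end

section
/- Let A = R(σ,f) be a simple GWA satisfying the standing hypotheses, α a root of f, and 2 ≤ j ≤ n_α. Then Hom_{GrMod-A}(M_α^{-}, M_α^{-j}) is one-dimensional over k: every degree-0 graded homomorphism M_α^{-} → M_α^{-j} sends the class of 1 to a scalar multiple of the class of (z−α)^{j−1}. -/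
open Polynomial

set_option synthInstance.maxHeartbeats 800000
set_option maxHeartbeats 1600000
set_option linter.unusedVariables false

namespace GWA

variable {k : Type} [CommRing k] {R : Type} [CommRing R] [Algebra k R]
  {σ : R ≃ₐ[k] R} {f : R}

lemma r_add (a b : R) : r k R σ f (a + b) = r k R σ f a + r k R σ f b := by
  unfold r
  rw [RingQuot.mkAlgHom_rel k (GWArel.add a b), map_add]

lemma r_mul (a b : R) : r k R σ f (a * b) = r k R σ f a * r k R σ f b := by
  unfold r
  rw [RingQuot.mkAlgHom_rel k (GWArel.mul a b), map_mul]

lemma r_algebraMap (c : k) : r k R σ f (algebraMap k R c) = algebraMap k (GWA k R σ f) c := by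
  unfold r
  rw [RingQuot.mkAlgHom_rel k (GWArel.alg c), AlgHom.commutes]

lemma r_one : r k R σ f 1 = 1 := by
  have := r_algebraMap (σ := σ) (f := f) (1 : k)
  simpa using this

lemma r_sub (a b : R) : r k R σ f (a - b) = r k R σ f a - r k R σ f b := by
  have h := r_add (σ := σ) (f := f) (a - b) b
  simp only [sub_add_cancel] at h
  rw [h, add_sub_cancel_right]

lemma X_mul_r (a : R) : X k R σ f * r k R σ f a = r k R σ f (σ a) * X k R σ f := by
  unfold X r
  rw [← map_mul, ← map_mul, RingQuot.mkAlgHom_rel k (GWArel.xr a)]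
end GWA

namespace St4

variable (k : Type) [Field k] (f : k[X]) (α : k) (j : ℕ)

/-- The ideal `((X-α)^j)` of `k[X]`. -/
noncomputable def QI : Ideal k[X] := Ideal.span {(X - C α) ^ j}

/-- The quotient ring `k[X]/((X-α)^j)`. -/
noncomputable abbrev Qb : Type := k[X] ⧸ QI k α j

/-- `p ↦ p(X - n) mod (X-α)^j`. -/
noncomputable def μ (n : ℕ) : k[X] →ₐ[k] Qb k α j :=
  (Ideal.Quotient.mkₐ k (QI k α j)).comp (aeval (X - C (n : k)))

lemma μ_apply (n : ℕ) (p : k[X]) :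
    μ k α j n p = Ideal.Quotient.mk (QI k α j) (aeval (X - C (n : k)) p) := rfl

lemma μ_zero (p : k[X]) : μ k α j 0 p = Ideal.Quotient.mk (QI k α j) p := by
  simp [μ_apply]

lemma μ_sigma (n : ℕ) (a : k[X]) :
    μ k α j (n + 1) (algEquivAevalXAddC (1 : k) a) = μ k α j n a := by
  simp only [μ_apply, algEquivAevalXAddC_apply]
  rw [← aeval_algHom_apply (aeval (X - C ((n+1 : ℕ) : k))) (X + C (1:k)) a]
  congr 2
  push_cast
  simp only [map_add, aeval_X, aeval_C, map_one]
  ring_nf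

lemma μ_sigma_symm (n : ℕ) (a : k[X]) :
    μ k α j n ((algEquivAevalXAddC (1 : k)).symm a) = μ k α j (n + 1) a := by
  simp only [algEquivAevalXAddC_symm, μ_apply, algEquivAevalXAddC_apply]
  rw [← aeval_algHom_apply (aeval (X - C ((n : ℕ) : k))) (X + C (-1:k)) a]
  congr 2
  push_cast
  simp only [map_add, aeval_X, aeval_C, map_neg, map_one]
  ring_nf

/-- The representation space: one copy of `Qb` in each degree `-n`. -/
abbrev V : Type := ℕ → Qb k α j

/-- Action of `r p` on `V`. -/
noncomputable def Tr (p : k[X]) : V k α j →ₗ[k] V k α j where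
  toFun v n := μ k α j n p * v n
  map_add' v w := by funext n; simp [mul_add]
  map_smul' c v := by funext n; simp [mul_smul_comm]

/-- Action of `x` on `V`. -/
noncomputable def Tx : V k α j →ₗ[k] V k α j where
  toFun v n := μ k α j (n + 1) f * v (n + 1)
  map_add' v w := by funext n; simp [mul_add]
  map_smul' c v := by funext n; simp [mul_smul_comm]

/-- Action of `y` on `V`. -/
noncomputable def Ty : V k α j →ₗ[k] V k α j where
  toFun v n := match n with | 0 => 0 | m + 1 => v m
  map_add' v w := by funext n; cases n <;> simp
  map_smul' c v := by funext n; cases n <;> simp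

lemma Tr_apply (p : k[X]) (v : V k α j) (n : ℕ) : Tr k α j p v n = μ k α j n p * v n := rfl
lemma Tx_apply (v : V k α j) (n : ℕ) : Tx k f α j v n = μ k α j (n + 1) f * v (n + 1) := rfl
lemma Ty_apply_zero (v : V k α j) : Ty k α j v 0 = 0 := rfl
lemma Ty_apply_succ (v : V k α j) (n : ℕ) : Ty k α j v (n + 1) = v n := rfl

open MulOpposite in
/-- The map on generators of the free algebra. -/
noncomputable def genF : GWAgen k[X] → (Module.End k (V k α j))ᵐᵒᵖ
  | .r a => op (Tr k α j a)
  | .x => op (Tx k f α j)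
  | .y => op (Ty k α j)

open MulOpposite in
noncomputable def F : FreeAlgebra k (GWAgen k[X]) →ₐ[k] (Module.End k (V k α j))ᵐᵒᵖ :=
  FreeAlgebra.lift k (genF k f α j)

end St4

namespace St4
open MulOpposite

variable (k : Type) [Field k] (f : k[X]) (α : k) (j : ℕ)

variable {k f α j} in
lemma mk_f_zero (hdvd : (X - C α) ^ j ∣ f) :
    Ideal.Quotient.mk (QI k α j) f = 0 :=
  Ideal.Quotient.eq_zero_iff_mem.2 (by rw [QI]; exact Ideal.mem_span_singleton.2 hdvd)

variable {k f α j} in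
lemma F_rel (hdvd : (X - C α) ^ j ∣ f) :
    ∀ ⦃a b : FreeAlgebra k (GWAgen k[X])⦄,
      GWArel k k[X] (algEquivAevalXAddC (1 : k)) f a b → F k f α j a = F k f α j b := by
  intro a b h
  induction h with
  | add a b =>
      simp only [F, map_add, FreeAlgebra.lift_ι_apply, genF, ← op_add]
      congr 1
      ext v n
      simp [Tr_apply, map_add, add_mul]
  | mul a b =>
      simp only [F, map_mul, FreeAlgebra.lift_ι_apply, genF, ← op_mul]
      congr 1
      ext v n
      simp only [Tr_apply, Module.End.mul_apply, map_mul]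
      ring
  | alg c =>
      simp only [F, FreeAlgebra.lift_ι_apply, genF, AlgHom.commutes]
      rw [show algebraMap k (Module.End k (V k α j))ᵐᵒᵖ c
            = op (algebraMap k (Module.End k (V k α j)) c) from rfl]
      congr 1
      ext v n
      rw [Tr_apply, AlgHom.commutes, Module.algebraMap_end_apply, Pi.smul_apply]
      exact (Algebra.smul_def c (v n)).symm
  | xy =>
      simp only [F, map_mul, FreeAlgebra.lift_ι_apply, genF, ← op_mul]
      congr 1
      ext v n
      cases n with
      | zero =>
          simp only [Module.End.mul_apply, Ty_apply_zero, Tr_apply, μ_zero,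
            mk_f_zero hdvd, zero_mul]
      | succ m =>
          simp only [Module.End.mul_apply, Ty_apply_succ, Tx_apply, Tr_apply]
  | yx =>
      simp only [F, map_mul, FreeAlgebra.lift_ι_apply, genF, ← op_mul]
      congr 1
      ext v n
      simp only [Module.End.mul_apply, Tx_apply, Ty_apply_succ, Tr_apply, μ_sigma_symm]
  | xr a =>
      simp only [F, map_mul, FreeAlgebra.lift_ι_apply, genF, ← op_mul]
      congr 1
      ext v n
      simp only [Module.End.mul_apply, Tx_apply, Tr_apply, μ_sigma]
      ring
  | yr a =>
      simp only [F, map_mul, FreeAlgebra.lift_ι_apply, genF, ← op_mul]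
      congr 1
      ext v n
      cases n with
      | zero =>
          simp only [Module.End.mul_apply, Tr_apply, Ty_apply_zero, mul_zero]
      | succ m =>
          simp only [Module.End.mul_apply, Tr_apply, Ty_apply_succ, μ_sigma_symm]

variable {k f α j} in
/-- The representation of the GWA on `V`. -/
noncomputable def φ (hdvd : (X - C α) ^ j ∣ f) :
    GWAk k f →ₐ[k] (Module.End k (V k α j))ᵐᵒᵖ :=
  RingQuot.liftAlgHom k ⟨F k f α j, F_rel hdvd⟩

variable {k f α j} in
lemma φ_X (hdvd : (X - C α) ^ j ∣ f) :
    φ hdvd (GWA.X k k[X] (algEquivAevalXAddC (1 : k)) f) = op (Tx k f α j) := by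
  rw [φ, GWA.X, RingQuot.liftAlgHom_mkAlgHom_apply]
  simp only [F, FreeAlgebra.lift_ι_apply, genF]

variable {k f α j} in
lemma φ_r (hdvd : (X - C α) ^ j ∣ f) (p : k[X]) :
    φ hdvd (GWA.r k k[X] (algEquivAevalXAddC (1 : k)) f p) = op (Tr k α j p) := by
  rw [φ, GWA.r, RingQuot.liftAlgHom_mkAlgHom_apply]
  simp only [F, FreeAlgebra.lift_ι_apply, genF]

end St4

namespace St4
open MulOpposite

variable (k : Type) [Field k] (f : k[X]) (α : k) (j : ℕ)

/-- The cyclic vector. -/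
noncomputable def v0 : V k α j := fun n => if n = 0 then 1 else 0

variable {k f α j} in
lemma ev_zero_of_mem (hdvd : (X - C α) ^ j ∣ f) {w : GWAk k f}
    (hw : w ∈ rightIdealM k f α j) : (φ hdvd w).unop (v0 k α j) = 0 := by
  induction hw using Submodule.span_induction with
  | mem w hw =>
      rcases hw with h | h
      · rw [h, φ_r hdvd]
        funext n
        cases n with
        | zero =>
            show μ k α j 0 ((X - C α) ^ j) * v0 k α j 0 = 0
            rw [μ_zero, Ideal.Quotient.eq_zero_iff_mem.2
              (by rw [QI]; exact Ideal.mem_span_singleton_self _), zero_mul]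
        | succ m =>
            show μ k α j (m + 1) ((X - C α) ^ j) * v0 k α j (m + 1) = 0
            rw [show v0 k α j (m + 1) = 0 from rfl, mul_zero]
      · simp only [Set.mem_singleton_iff] at h
        rw [h, φ_X hdvd]
        funext n
        show μ k α j (n + 1) f * v0 k α j (n + 1) = 0
        rw [show v0 k α j (n + 1) = 0 from rfl, mul_zero]
  | zero => simp
  | add u w hu hw ihu ihw => rw [map_add, unop_add, LinearMap.add_apply, ihu, ihw, add_zero]
  | smul a w hw ihw =>
      rw [MulOpposite.smul_eq_mul_unop, map_mul, unop_mul, Module.End.mul_apply, ihw, map_zero]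

variable {k f α j} in
lemma dvd_of_r_mem (hdvd : (X - C α) ^ j ∣ f) {p : k[X]}
    (hp : GWA.r k k[X] (algEquivAevalXAddC (1 : k)) f p ∈ rightIdealM k f α j) :
    (X - C α) ^ j ∣ p := by
  have h := ev_zero_of_mem hdvd hp
  rw [φ_r hdvd] at h
  have h0 := congrFun h 0
  rw [show ((op (Tr k α j p)).unop (v0 k α j)) 0 = μ k α j 0 p * v0 k α j 0 from rfl,
    show v0 k α j 0 = 1 from rfl, mul_one, μ_zero] at h0
  rw [← Ideal.mem_span_singleton]
  have := Ideal.Quotient.eq_zero_iff_mem.1 h0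
  rwa [QI] at this
end St4

namespace St4
open MulOpposite

variable (k : Type) [Field k] (f : Polynomial k)

/-- Left multiplication by a fixed element, as a right-module endomorphism. -/
noncomputable def Lmul (c : GWAk k f) : GWAk k f →ₗ[(GWAk k f)ᵐᵒᵖ] GWAk k f where
  toFun b := c * b
  map_add' := mul_add c
  map_smul' m b := by
    simp only [MulOpposite.smul_eq_mul_unop, RingHom.id_apply, mul_assoc]

lemma Lmul_apply (c b : GWAk k f) : Lmul k f c b = c * b := rfl

end St4


open MulOpposite

/-- For a simple GWA `A = R(σ,f)`, a root `α` of `f` and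
`2 ≤ j ≤ n_α`, the space of degree-0 graded homomorphisms `M_α^{−} → M_α^{−j}` is
one-dimensional over `k`: there is a nonzero homomorphism `g₀` sending the class of `1`
to the class of `(z−α)^{j−1}`, and every homomorphism sending the class of `1` into the
degree-0 component (the image of `R = k[z]`) is a scalar multiple of `g₀`. -/

theorem hom_Mminus_one_dimensional (k : Type) [Field k] [IsAlgClosed k] [CharZero k]
    (f : k[X]) (hf : f.Monic)
    (hsimple : ∀ β γ : k, f.IsRoot β → f.IsRoot γ → (∃ t : ℤ, β = γ + t) → β = γ)
    (α : k) (hα : f.IsRoot α) (j : ℕ) (hj1 : 2 ≤ j) (hj2 : j ≤ f.rootMultiplicity α) :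
    ∃ g₀ : Mminus k f α 1 →ₗ[(GWAk k f)ᵐᵒᵖ] Mminus k f α j,
      g₀ ≠ 0 ∧
        g₀ ((rightIdealM k f α 1).mkQ 1) =
          (rightIdealM k f α j).mkQ
            (GWA.r k k[X] (algEquivAevalXAddC (1 : k)) f ((X - C α) ^ (j - 1))) ∧
          ∀ g : Mminus k f α 1 →ₗ[(GWAk k f)ᵐᵒᵖ] Mminus k f α j,
            (∃ p : k[X],
                g ((rightIdealM k f α 1).mkQ 1) =
                  (rightIdealM k f α j).mkQ
                    (GWA.r k k[X] (algEquivAevalXAddC (1 : k)) f p)) →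
              ∃ c : k, ∀ m : Mminus k f α 1,
                g m = MulOpposite.op (algebraMap k (GWAk k f) c) • g₀ m := by
  classical
  have hdvd : (X - C α) ^ j ∣ f := (pow_dvd_pow _ hj2).trans (f.pow_rootMultiplicity_dvd α)
  have hj' : j - 1 + 1 = j := by omega
  set σk := algEquivAevalXAddC (1 : k) with hσk
  set cE := GWA.r k k[X] σk f ((X - C α) ^ (j - 1)) with hcE
  have hle : rightIdealM k f α 1 ≤
      LinearMap.ker ((rightIdealM k f α j).mkQ ∘ₗ St4.Lmul k f cE) := by
    rw [rightIdealM, Submodule.span_le]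
    rintro w hw
    simp only [Set.mem_insert_iff, Set.mem_singleton_iff] at hw
    rcases hw with rfl | rfl
    · rw [SetLike.mem_coe, LinearMap.mem_ker, LinearMap.comp_apply, St4.Lmul_apply,
        Submodule.mkQ_apply, Submodule.Quotient.mk_eq_zero, hcE, pow_one, ← GWA.r_mul,
        ← pow_succ, hj']
      exact Submodule.subset_span (Set.mem_insert _ _)
    · rw [SetLike.mem_coe, LinearMap.mem_ker, LinearMap.comp_apply, St4.Lmul_apply,
        Submodule.mkQ_apply, Submodule.Quotient.mk_eq_zero]
      have hx : cE * GWA.X k k[X] σk f =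
          GWA.X k k[X] σk f * GWA.r k k[X] σk f (σk.symm ((X - C α) ^ (j - 1))) := by
        rw [GWA.X_mul_r, AlgEquiv.apply_symm_apply, hcE]
      rw [hx, show GWA.X k k[X] σk f * GWA.r k k[X] σk f (σk.symm ((X - C α) ^ (j - 1)))
            = op (GWA.r k k[X] σk f (σk.symm ((X - C α) ^ (j - 1)))) • GWA.X k k[X] σk f
          from (MulOpposite.smul_eq_mul_unop _ _).symm]
      exact Submodule.smul_mem _ _
        (Submodule.subset_span (Set.mem_insert_iff.2 (Or.inr rfl)))
  set g0 : Mminus k f α 1 →ₗ[(GWAk k f)ᵐᵒᵖ] Mminus k f α j :=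
    Submodule.liftQ (rightIdealM k f α 1)
      ((rightIdealM k f α j).mkQ ∘ₗ St4.Lmul k f cE) hle with hg0
  have hg1 : g0 ((rightIdealM k f α 1).mkQ 1) = (rightIdealM k f α j).mkQ cE := by
    rw [hg0, Submodule.mkQ_apply, Submodule.liftQ_apply, LinearMap.comp_apply,
      St4.Lmul_apply, mul_one, Submodule.mkQ_apply]
  refine ⟨g0, ?_, hg1, ?_⟩
  · intro h0
    rw [h0, LinearMap.zero_apply] at hg1
    have hmem : cE ∈ rightIdealM k f α j := by
      rwa [eq_comm, Submodule.mkQ_apply, Submodule.Quotient.mk_eq_zero] at hg1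
    have hdvd' := St4.dvd_of_r_mem hdvd hmem
    have hne : ((X : k[X]) - C α) ^ (j - 1) ≠ 0 := pow_ne_zero _ (X_sub_C_ne_zero α)
    have hdeg := Polynomial.natDegree_le_of_dvd hdvd' hne
    rw [natDegree_pow, natDegree_pow, natDegree_X_sub_C] at hdeg
    omega
  · rintro g ⟨p, hp⟩
    have hz : (rightIdealM k f α 1).mkQ (GWA.r k k[X] σk f (X - C α)) = 0 := by
      rw [Submodule.mkQ_apply, Submodule.Quotient.mk_eq_zero]
      have : GWA.r k k[X] σk f ((X - C α) ^ 1) ∈ rightIdealM k f α 1 :=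
        Submodule.subset_span (Set.mem_insert _ _)
      rwa [pow_one] at this
    have e1 : (rightIdealM k f α 1).mkQ (GWA.r k k[X] σk f (X - C α))
        = op (GWA.r k k[X] σk f (X - C α)) • (rightIdealM k f α 1).mkQ 1 := by
      rw [← map_smul, MulOpposite.smul_eq_mul_unop, unop_op, one_mul]
    have key : (rightIdealM k f α j).mkQ (GWA.r k k[X] σk f (p * (X - C α))) = 0 := by
      have hgz : g ((rightIdealM k f α 1).mkQ (GWA.r k k[X] σk f (X - C α))) = 0 := by
        rw [hz, map_zero]
      rw [e1, map_smul, hp, ← map_smul, MulOpposite.smul_eq_mul_unop, unop_op,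
        ← GWA.r_mul] at hgz
      exact hgz
    have hdvdp : (X - C α) ^ j ∣ p * (X - C α) :=
      St4.dvd_of_r_mem hdvd
        (by rwa [Submodule.mkQ_apply, Submodule.Quotient.mk_eq_zero] at key)
    have hdvdp' : (X - C α) ^ (j - 1) ∣ p := by
      have h2 : (X - C α) ^ (j - 1) * (X - C α) ∣ p * (X - C α) := by
        rwa [← pow_succ, hj']
      exact (mul_dvd_mul_iff_right (X_sub_C_ne_zero α)).1 h2
    obtain ⟨h, rfl⟩ := hdvdp'
    refine ⟨h.eval α, ?_⟩
    have claim : (rightIdealM k f α j).mkQ (GWA.r k k[X] σk f ((X - C α) ^ (j - 1) * h))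
        = op (algebraMap k (GWAk k f) (h.eval α)) • (rightIdealM k f α j).mkQ cE := by
      rw [← map_smul, MulOpposite.smul_eq_mul_unop, unop_op, Submodule.mkQ_apply,
        Submodule.mkQ_apply, Submodule.Quotient.eq]
      have hce : cE * algebraMap k (GWAk k f) (h.eval α)
          = GWA.r k k[X] σk f ((X - C α) ^ (j - 1) * C (h.eval α)) := by
        rw [hcE, GWA.r_mul]
        congr 1
        rw [← GWA.r_algebraMap (σ := σk) (f := f) (h.eval α), Polynomial.algebraMap_eq]
      rw [hce, ← GWA.r_sub]
      obtain ⟨q, hq⟩ := Polynomial.X_sub_C_dvd_sub_C_eval (a := α) (p := h)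
      have hpoly : (X - C α) ^ (j - 1) * h - (X - C α) ^ (j - 1) * C (h.eval α)
          = (X - C α) ^ j * q := by
        rw [← mul_sub, hq, ← mul_assoc, ← pow_succ, hj']
      rw [hpoly, GWA.r_mul,
        show GWA.r k k[X] σk f ((X - C α) ^ j) * GWA.r k k[X] σk f q
            = op (GWA.r k k[X] σk f q) • GWA.r k k[X] σk f ((X - C α) ^ j)
          from (MulOpposite.smul_eq_mul_unop _ _).symm]
      exact Submodule.smul_mem _ _ (Submodule.subset_span (Set.mem_insert _ _))
    intro m
    obtain ⟨a, rfl⟩ := (rightIdealM k f α 1).mkQ_surjective m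
    have hm : (rightIdealM k f α 1).mkQ a = op a • (rightIdealM k f α 1).mkQ 1 := by
      rw [← map_smul, MulOpposite.smul_eq_mul_unop, unop_op, one_mul]
    rw [hm, map_smul, map_smul, hp, hg1, claim, smul_smul, smul_smul,
      ← MulOpposite.op_mul, ← MulOpposite.op_mul]
    congr 2
    exact Algebra.commutes (h.eval α) a
end

section
/- Two finitely generated graded right A-submodules I, J of Q_gr(A) are isomorphic as graded right A-modules if and only if their sequences of (monic, normalized) structure constants coincide: c_i = d_i for all i ∈ ℤ. -/
/- Abstract model of the graded quotient division ring `Q_gr(A) = k(z)[x, x⁻¹; σ]` of the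
GWA `A = k[z](σ, f)` with `σ(z) = z + 1`:  a ring `Q` together with an embedding
`φ : k(z) → Q`, a unit `x` with `x·φ(q) = φ(σ(q))·x`, such that every element of `Q` is
uniquely a finite sum `Σ φ(q_i)·xⁱ`.  Inside `Q`, the GWA `A` is the subring generated by
`φ(k[z])`, `x` and `y = φ(σ⁻¹(f))·x⁻¹`. -/

open Polynomial

/-- The shift `σ^i` on polynomials: `(σ^i p)(z) = p(z + i)`. -/
noncomputable def pshift (k : Type) [Field k] (i : ℤ) (p : k[X]) : k[X] :=
  p.comp (X + C (i : k))

/-- The element `y = φ(σ⁻¹(f)) · x⁻¹` of `Q`. -/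
noncomputable def gwaY (k : Type) [Field k] (Q : Type) [Ring Q]
    (σ : RatFunc k ≃+* RatFunc k) (φ : RatFunc k →+* Q) (x : Qˣ) (f : k[X]) : Q :=
  φ (σ.symm (algebraMap k[X] (RatFunc k) f)) * ((x⁻¹ : Qˣ) : Q)

/-- The copy of the GWA `A = k[z](σ, f)` inside `Q`: the subring generated by the image
of `k[z]`, by `x`, and by `y`. -/
noncomputable def gwaSubring (k : Type) [Field k] (Q : Type) [Ring Q]
    (σ : RatFunc k ≃+* RatFunc k) (φ : RatFunc k →+* Q) (x : Qˣ) (f : k[X]) : Subring Q :=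
  Subring.closure
    ({(x : Q), gwaY k Q σ φ x f} ∪
      Set.range fun p : k[X] => φ (algebraMap k[X] (RatFunc k) p))

lemma pshift_zero' (k : Type) [Field k] (p : k[X]) : pshift k 0 p = p := by
  simp [pshift]

lemma pshift_pshift (k : Type) [Field k] (i j : ℤ) (p : k[X]) :
    pshift k i (pshift k j p) = pshift k (i + j) p := by
  simp only [pshift, comp_assoc, add_comp, X_comp, C_comp]
  push_cast
  rw [map_add, add_assoc]

lemma pshift_succ (k : Type) [Field k] (i : ℤ) (p : k[X]) :
    pshift k i (p.comp (X + 1)) = pshift k (i+1) p := by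
  have : p.comp (X+1) = pshift k 1 p := by simp [pshift]
  rw [this, pshift_pshift]

lemma pshift_pred (k : Type) [Field k] (i : ℤ) (p : k[X]) :
    pshift k i (p.comp (X - 1)) = pshift k (i-1) p := by
  have : p.comp (X-1) = pshift k (-1) p := by simp [pshift, sub_eq_add_neg]
  rw [this, pshift_pshift]; ring_nf

section aux
variable {k : Type} [Field k] {Q : Type} [Ring Q]
  (σ : RatFunc k ≃+* RatFunc k) (φ : RatFunc k →+* Q) (x : Qˣ)

lemma xpow_comm
    (hσ : ∀ p : k[X], σ (algebraMap k[X] (RatFunc k) p)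
        = algebraMap k[X] (RatFunc k) (p.comp (X + 1)))
    (hx : ∀ q : RatFunc k, (x : Q) * φ q = φ (σ q) * (x : Q))
    (i : ℤ) (p : k[X]) :
    ((x ^ i : Qˣ) : Q) * φ (algebraMap k[X] (RatFunc k) p)
      = φ (algebraMap k[X] (RatFunc k) (pshift k i p)) * ((x ^ i : Qˣ) : Q) := by
  have hxinv : ∀ p : k[X], ((x⁻¹ : Qˣ) : Q) * φ (algebraMap k[X] (RatFunc k) p)
      = φ (algebraMap k[X] (RatFunc k) (p.comp (X - 1))) * ((x⁻¹ : Qˣ) : Q) := by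
    intro p
    have h1 : (x : Q) * φ (algebraMap k[X] (RatFunc k) (p.comp (X - 1)))
        = φ (algebraMap k[X] (RatFunc k) p) * (x : Q) := by
      rw [hx, hσ, comp_assoc]
      norm_num
    calc ((x⁻¹ : Qˣ) : Q) * φ (algebraMap k[X] (RatFunc k) p)
        = ((x⁻¹ : Qˣ) : Q) * (φ (algebraMap k[X] (RatFunc k) p) * (x : Q)) * ((x⁻¹ : Qˣ) : Q) := by
          rw [mul_assoc, mul_assoc]; simp
      _ = ((x⁻¹ : Qˣ) : Q) * ((x : Q) * φ (algebraMap k[X] (RatFunc k) (p.comp (X - 1)))) * ((x⁻¹ : Qˣ) : Q) := by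
          rw [h1]
      _ = φ (algebraMap k[X] (RatFunc k) (p.comp (X - 1))) * ((x⁻¹ : Qˣ) : Q) := by
          rw [← mul_assoc]; simp
  induction i using Int.induction_on generalizing p with
  | zero => simp [pshift]
  | succ n ih =>
    have hz : (x ^ ((n : ℤ) + 1) : Qˣ) = x ^ (n : ℤ) * x := by
      rw [zpow_add_one]
    rw [hz, Units.val_mul, mul_assoc, hx, hσ, ← mul_assoc, ih (p.comp (X+1)), mul_assoc,
      pshift_succ]
  | pred n ih =>
    have hz : (x ^ (-(n : ℤ) - 1) : Qˣ) = x ^ (-(n : ℤ)) * x⁻¹ := by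
      rw [zpow_sub_one]
    rw [hz, Units.val_mul, mul_assoc, hxinv, ← mul_assoc, ih (p.comp (X-1)), mul_assoc,
      pshift_pred]

lemma term_mul
    (hσ : ∀ p : k[X], σ (algebraMap k[X] (RatFunc k) p)
        = algebraMap k[X] (RatFunc k) (p.comp (X + 1)))
    (hx : ∀ q : RatFunc k, (x : Q) * φ q = φ (σ q) * (x : Q))
    (q : RatFunc k) (i : ℤ) (p : k[X]) :
    (φ q * ((x ^ i : Qˣ) : Q)) * φ (algebraMap k[X] (RatFunc k) p)
      = φ (q * algebraMap k[X] (RatFunc k) (pshift k i p)) * ((x ^ i : Qˣ) : Q) := by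
  rw [mul_assoc, xpow_comm σ φ x hσ hx, ← mul_assoc, ← map_mul]

lemma term_mul_shift
    (hσ : ∀ p : k[X], σ (algebraMap k[X] (RatFunc k) p)
        = algebraMap k[X] (RatFunc k) (p.comp (X + 1)))
    (hx : ∀ q : RatFunc k, (x : Q) * φ q = φ (σ q) * (x : Q))
    (q : RatFunc k) (i : ℤ) (s : k[X]) :
    (φ q * ((x ^ i : Qˣ) : Q)) * φ (algebraMap k[X] (RatFunc k) (pshift k (-i) s))
      = φ (algebraMap k[X] (RatFunc k) s * q) * ((x ^ i : Qˣ) : Q) := by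
  rw [term_mul σ φ x hσ hx, pshift_pshift]
  norm_num [pshift_zero', mul_comm]

lemma push_mem (P R : AddSubgroup Q) (av bv : ℤ → RatFunc k)
    (hP : ∀ w : Q, w ∈ P ↔
        ∃ c : ℤ →₀ RatFunc k,
          (∀ i, ∃ p : k[X], c i = algebraMap k[X] (RatFunc k) p * av i) ∧
            w = c.sum fun i q => φ q * ((x ^ i : Qˣ) : Q))
    (hR : ∀ w : Q, w ∈ R ↔
        ∃ c : ℤ →₀ RatFunc k,
          (∀ i, ∃ p : k[X], c i = algebraMap k[X] (RatFunc k) p * bv i) ∧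
            w = c.sum fun i q => φ q * ((x ^ i : Qˣ) : Q))
    (g : RatFunc k) (hg : ∀ i, ∃ s : k[X], g * av i = algebraMap k[X] (RatFunc k) s * bv i)
    (w : Q) (hw : w ∈ P) : φ g * w ∈ R := by
  obtain ⟨c, hc1, hc2⟩ := (hP w).1 hw
  refine (hR _).2 ⟨c.mapRange (fun q => g * q) (mul_zero g), fun i => ?_, ?_⟩
  · obtain ⟨p, hp⟩ := hc1 i
    obtain ⟨s, hs⟩ := hg i
    refine ⟨p * s, ?_⟩
    simp only [Finsupp.mapRange_apply]
    rw [hp, map_mul]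
    calc g * (algebraMap k[X] (RatFunc k) p * av i)
        = algebraMap k[X] (RatFunc k) p * (g * av i) := by ring
      _ = algebraMap k[X] (RatFunc k) p * (algebraMap k[X] (RatFunc k) s * bv i) := by rw [hs]
      _ = _ := by ring
  · rw [hc2, Finsupp.mul_sum, Finsupp.sum_mapRange_index (by simp)]
    exact Finsupp.sum_congr fun i _ => by rw [map_mul, mul_assoc]

end aux

/-- Two finitely generated graded right `A`-submodules
`I = ⊕ R·a_i·xⁱ` and `J = ⊕ R·b_i·xⁱ` of `Q_gr(A)` are isomorphic as graded right
`A`-modules if and only if their monic normalized structure constants coincide, i.e.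
`a_i·a_{i+1}⁻¹` and `b_i·b_{i+1}⁻¹` agree up to a nonzero scalar of `k` for every `i`. -/
theorem graded_iso_iff_structure_constants
    (k : Type) [Field k] [CharZero k] [IsAlgClosed k]
    (Q : Type) [Ring Q]
    (σ : RatFunc k ≃+* RatFunc k)
    (hσ : ∀ p : k[X], σ (algebraMap k[X] (RatFunc k) p)
        = algebraMap k[X] (RatFunc k) (p.comp (X + 1)))
    (φ : RatFunc k →+* Q) (hφ : Function.Injective φ)
    (x : Qˣ)
    (hx : ∀ q : RatFunc k, (x : Q) * φ q = φ (σ q) * (x : Q))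
    (hbasis : ∀ w : Q, ∃! c : ℤ →₀ RatFunc k,
        w = c.sum fun i q => φ q * ((x ^ i : Qˣ) : Q))
    (f : k[X]) (hf : f.Monic) (hf0 : f ≠ 0)
    (M N : AddSubgroup Q) (a b : ℤ → RatFunc k)
    (ha : ∀ i, a i ≠ 0) (hb : ∀ i, b i ≠ 0)
    (hM : ∀ w : Q, w ∈ M ↔
        ∃ c : ℤ →₀ RatFunc k,
          (∀ i, ∃ p : k[X], c i = algebraMap k[X] (RatFunc k) p * a i) ∧
            w = c.sum fun i q => φ q * ((x ^ i : Qˣ) : Q))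
    (hN : ∀ w : Q, w ∈ N ↔
        ∃ c : ℤ →₀ RatFunc k,
          (∀ i, ∃ p : k[X], c i = algebraMap k[X] (RatFunc k) p * b i) ∧
            w = c.sum fun i q => φ q * ((x ^ i : Qˣ) : Q))
    (hMsub : ∀ w ∈ M, ∀ u ∈ gwaSubring k Q σ φ x f, w * u ∈ M)
    (hNsub : ∀ w ∈ N, ∀ u ∈ gwaSubring k Q σ φ x f, w * u ∈ N)
    (hMfg : ∃ S : Finset Q, (↑S : Set Q) ⊆ M ∧
        ∀ w ∈ M, w ∈ AddSubgroup.closure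
          {v : Q | ∃ s ∈ S, ∃ u ∈ gwaSubring k Q σ φ x f, v = s * u})
    (hNfg : ∃ S : Finset Q, (↑S : Set Q) ⊆ N ∧
        ∀ w ∈ N, w ∈ AddSubgroup.closure
          {v : Q | ∃ s ∈ S, ∃ u ∈ gwaSubring k Q σ φ x f, v = s * u}) :
    (∃ e : M ≃+ N,
        (∀ (m : M) (u : Q), ∀ hu : u ∈ gwaSubring k Q σ φ x f,
          ∀ hmu : (m : Q) * u ∈ M, ((e ⟨(m : Q) * u, hmu⟩ : N) : Q) = ((e m : N) : Q) * u) ∧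
          ∀ (i : ℤ) (m : M), (∃ q : RatFunc k, (m : Q) = φ q * ((x ^ i : Qˣ) : Q)) →
            ∃ q : RatFunc k, ((e m : N) : Q) = φ q * ((x ^ i : Qˣ) : Q)) ↔
      ∀ i : ℤ, ∃ lam : k, lam ≠ 0 ∧
        a i * b (i + 1) = algebraMap k (RatFunc k) lam * (a (i + 1) * b i) := by
  have hAinj : Function.Injective (algebraMap k[X] (RatFunc k)) :=
    IsFractionRing.injective k[X] (RatFunc k)
  have algC : ∀ u : k, algebraMap k[X] (RatFunc k) (C u) = algebraMap k (RatFunc k) u := by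
    intro u
    rw [IsScalarTower.algebraMap_apply k k[X] (RatFunc k), Polynomial.algebraMap_eq]
  have hsingle : ∀ (q : RatFunc k) (i : ℤ),
      ((Finsupp.single i q).sum fun j r => φ r * ((x ^ j : Qˣ) : Q)) = φ q * ((x ^ i : Qˣ) : Q) :=
    fun q i => Finsupp.sum_single_index (by simp)
  have huniq : ∀ c d : ℤ →₀ RatFunc k,
      (c.sum fun i q => φ q * ((x ^ i : Qˣ) : Q)) = (d.sum fun i q => φ q * ((x ^ i : Qˣ) : Q)) →
        c = d := by
    intro c d h
    obtain ⟨c₀, _, hu⟩ := hbasis (c.sum fun i q => φ q * ((x ^ i : Qˣ) : Q))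
    rw [hu c rfl, hu d h]
  have coeff_eq : ∀ (q q' : RatFunc k) (i : ℤ),
      φ q * ((x ^ i : Qˣ) : Q) = φ q' * ((x ^ i : Qˣ) : Q) → q = q' := by
    intro q q' i h
    apply hφ
    have h2 := congrArg (· * (((x ^ i)⁻¹ : Qˣ) : Q)) h
    simpa [mul_assoc] using h2
  have memM : ∀ (q : RatFunc k) (i : ℤ),
      φ q * ((x ^ i : Qˣ) : Q) ∈ M ↔ ∃ p : k[X], q = algebraMap k[X] (RatFunc k) p * a i := by
    intro q i
    constructor
    · intro h
      obtain ⟨c, hc1, hc2⟩ := (hM _).1 h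
      have hc : c = Finsupp.single i q := huniq _ _ (by rw [← hc2, hsingle])
      obtain ⟨p, hp⟩ := hc1 i
      exact ⟨p, by rw [← hp, hc, Finsupp.single_eq_same]⟩
    · rintro ⟨p, hp⟩
      refine (hM _).2 ⟨Finsupp.single i q, fun j => ?_, (hsingle q i).symm⟩
      by_cases hj : i = j
      · subst hj; exact ⟨p, by rwa [Finsupp.single_eq_same]⟩
      · exact ⟨0, by rw [Finsupp.single_eq_of_ne' hj]; simp⟩
  have memN : ∀ (q : RatFunc k) (i : ℤ),
      φ q * ((x ^ i : Qˣ) : Q) ∈ N ↔ ∃ p : k[X], q = algebraMap k[X] (RatFunc k) p * b i := by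
    intro q i
    constructor
    · intro h
      obtain ⟨c, hc1, hc2⟩ := (hN _).1 h
      have hc : c = Finsupp.single i q := huniq _ _ (by rw [← hc2, hsingle])
      obtain ⟨p, hp⟩ := hc1 i
      exact ⟨p, by rw [← hp, hc, Finsupp.single_eq_same]⟩
    · rintro ⟨p, hp⟩
      refine (hN _).2 ⟨Finsupp.single i q, fun j => ?_, (hsingle q i).symm⟩
      by_cases hj : i = j
      · subst hj; exact ⟨p, by rwa [Finsupp.single_eq_same]⟩
      · exact ⟨0, by rw [Finsupp.single_eq_of_ne' hj]; simp⟩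
  have hxmem : (x : Q) ∈ gwaSubring k Q σ φ x f :=
    Subring.subset_closure (Set.mem_union_left _ (by simp))
  have hpmem : ∀ p : k[X], φ (algebraMap k[X] (RatFunc k) p) ∈ gwaSubring k Q σ φ x f :=
    fun p => Subring.subset_closure (Set.mem_union_right _ ⟨p, rfl⟩)
  have hmi : ∀ i : ℤ, φ (a i) * ((x ^ i : Qˣ) : Q) ∈ M :=
    fun i => (memM _ _).2 ⟨1, by simp⟩
  have hni : ∀ i : ℤ, φ (b i) * ((x ^ i : Qˣ) : Q) ∈ N :=
    fun i => (memN _ _).2 ⟨1, by simp⟩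
  have hshiftpow : ∀ (w : Q) (i : ℤ), w * ((x ^ i : Qˣ) : Q) * (x : Q)
      = w * ((x ^ (i+1) : Qˣ) : Q) := by
    intro w i
    rw [mul_assoc, ← Units.val_mul, ← zpow_add_one]
  constructor
  · rintro ⟨e, heA, hdeg⟩
    -- key semilinearity lemma
    have key : ∀ (i : ℤ) (s : k[X]) (q q' : RatFunc k)
        (h1 : φ q * ((x ^ i : Qˣ) : Q) ∈ M)
        (h2 : φ (algebraMap k[X] (RatFunc k) s * q) * ((x ^ i : Qˣ) : Q) ∈ M),
        ((e ⟨_, h1⟩ : N) : Q) = φ q' * ((x ^ i : Qˣ) : Q) →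
        ((e ⟨_, h2⟩ : N) : Q)
          = φ (algebraMap k[X] (RatFunc k) s * q') * ((x ^ i : Qˣ) : Q) := by
      intro i s q q' h1 h2 hq
      have ht := term_mul_shift σ φ x hσ hx q i s
      have hmu : (φ q * ((x ^ i : Qˣ) : Q)) * φ (algebraMap k[X] (RatFunc k) (pshift k (-i) s)) ∈ M :=
        hMsub _ h1 _ (hpmem _)
      have hsub : (⟨φ (algebraMap k[X] (RatFunc k) s * q) * ((x ^ i : Qˣ) : Q), h2⟩ : M)
          = ⟨_, hmu⟩ := Subtype.ext ht.symm
      rw [hsub, heA ⟨_, h1⟩ _ (hpmem _) hmu, hq, term_mul_shift σ φ x hσ hx]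
    -- e sends φ(a i) xⁱ to a scalar multiple of φ(b i) xⁱ
    have H : ∀ i : ℤ, ∃ u : k, u ≠ 0 ∧
        ((e ⟨_, hmi i⟩ : N) : Q) = φ (algebraMap k (RatFunc k) u * b i) * ((x ^ i : Qˣ) : Q) := by
      intro i
      obtain ⟨q, hq⟩ := hdeg i ⟨_, hmi i⟩ ⟨a i, rfl⟩
      obtain ⟨p, hp⟩ := (memN q i).1 (by rw [← hq]; exact (e ⟨_, hmi i⟩).2)
      -- grading argument: e.symm of φ(b i) xⁱ is homogeneous of degree i
      set m' := e.symm ⟨_, hni i⟩ with hm'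
      obtain ⟨c, hc1, hc2⟩ := (hM _).1 m'.2
      have hmem_j : ∀ j : ℤ, φ (c j) * ((x ^ j : Qˣ) : Q) ∈ M :=
        fun j => (memM _ _).2 (hc1 j)
      have hm'sum : m' = ∑ j ∈ c.support, (⟨φ (c j) * ((x ^ j : Qˣ) : Q), hmem_j j⟩ : M) := by
        apply Subtype.ext
        rw [hc2, AddSubmonoidClass.coe_finset_sum]
        rfl
      choose q' hq' using fun j => hdeg j ⟨_, hmem_j j⟩ ⟨c j, rfl⟩
      have hsum2 : φ (b i) * ((x ^ i : Qˣ) : Q)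
          = ∑ j ∈ c.support, φ (q' j) * ((x ^ j : Qˣ) : Q) := by
        have h3 : (⟨_, hni i⟩ : N) = e m' := (e.apply_symm_apply _).symm
        have h4 : ((e m' : N) : Q) = ∑ j ∈ c.support, φ (q' j) * ((x ^ j : Qˣ) : Q) := by
          rw [hm'sum, map_sum, AddSubmonoidClass.coe_finset_sum]
          exact Finset.sum_congr rfl fun j _ => hq' j
        rw [← h4, ← h3]
      have hd : (∑ j ∈ c.support, Finsupp.single j (q' j)) = Finsupp.single i (b i) := by
        apply huniq
        rw [hsingle, hsum2,
          ← Finsupp.sum_finset_sum_index (fun j => by simp) (fun j q1 q2 => by rw [map_add, add_mul])]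
        exact Finset.sum_congr rfl fun j _ => hsingle _ _
      have hsupp : c.support ⊆ {i} := by
        intro j hj
        simp only [Finset.mem_singleton]
        by_contra hji
        have h5 : q' j = 0 := by
          have h6 := DFunLike.congr_fun hd j
          rw [Finsupp.single_eq_of_ne' (Ne.symm hji)] at h6
          rw [← h6, Finsupp.finset_sum_apply]
          rw [Finset.sum_eq_single_of_mem j hj (fun j' _ hj' => Finsupp.single_eq_of_ne' hj'),
            Finsupp.single_eq_same]
        have h7 : (e ⟨_, hmem_j j⟩ : N) = 0 := by
          apply Subtype.ext
          rw [hq' j, h5, map_zero, zero_mul]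
          rfl
        have h8 : (⟨_, hmem_j j⟩ : M) = 0 := e.injective (by rw [h7, map_zero])
        have h9 : φ (c j) * ((x ^ j : Qˣ) : Q) = 0 := congrArg Subtype.val h8
        have h10 : c j = 0 := by
          apply hφ
          rw [map_zero]
          have := congrArg (· * (((x ^ j)⁻¹ : Qˣ) : Q)) h9
          simpa [mul_assoc] using this
        exact Finsupp.mem_support_iff.1 hj h10
      have hcs : c = Finsupp.single i (c i) := Finsupp.support_subset_singleton.1 hsupp
      obtain ⟨r, hr⟩ := hc1 i
      have hm'eq : (m' : Q) = φ (algebraMap k[X] (RatFunc k) r * a i) * ((x ^ i : Qˣ) : Q) := by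
        rw [hc2]
        conv_lhs => rw [hcs]
        rw [hsingle, hr]
      have h2 : φ (algebraMap k[X] (RatFunc k) r * a i) * ((x ^ i : Qˣ) : Q) ∈ M :=
        hm'eq ▸ m'.2
      have hkey := key i r (a i) q (hmi i) h2 hq
      have hem' : (⟨_, h2⟩ : M) = m' := Subtype.ext hm'eq.symm
      have hbi : b i = algebraMap k[X] (RatFunc k) r * q := by
        apply coeff_eq _ _ i
        rw [← hkey, hem', hm']
        have := e.apply_symm_apply (⟨_, hni i⟩ : N)
        rw [this]
      have hrp : r * p = 1 := by
        apply hAinj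
        rw [map_mul, map_one]
        have hbne := hb i
        have h11 : algebraMap k[X] (RatFunc k) r * algebraMap k[X] (RatFunc k) p * b i
            = 1 * b i := by
          rw [one_mul, mul_assoc, ← hp, ← hbi]
        exact mul_right_cancel₀ hbne h11
      have hpu : IsUnit p := IsUnit.of_mul_eq_one r (by rw [mul_comm]; exact hrp)
      obtain ⟨u, hu0, hup⟩ := Polynomial.isUnit_iff.1 hpu
      refine ⟨u, hu0.ne_zero, ?_⟩
      rw [hq, hp, ← hup, algC]
    choose uu huu0 huu using H
    have hdvd : ∀ i : ℤ, ∃ cc : k[X], a i = algebraMap k[X] (RatFunc k) cc * a (i+1) := by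
      intro i
      have h1 : (φ (a i) * ((x ^ i : Qˣ) : Q)) * (x : Q) ∈ M := hMsub _ (hmi i) _ hxmem
      rw [hshiftpow] at h1
      exact (memM _ _).1 h1
    intro i
    obtain ⟨cc, hcc⟩ := hdvd i
    have hmu : (φ (a i) * ((x ^ i : Qˣ) : Q)) * (x : Q) ∈ M := hMsub _ (hmi i) _ hxmem
    have hmu2 : φ (algebraMap k[X] (RatFunc k) cc * a (i+1)) * ((x ^ (i+1) : Qˣ) : Q) ∈ M := by
      rw [← hcc, ← hshiftpow]; exact hmu
    have heq1 : ((e ⟨_, hmu⟩ : N) : Q)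
        = φ (algebraMap k (RatFunc k) (uu i) * b i) * ((x ^ (i+1) : Qˣ) : Q) := by
      rw [heA ⟨_, hmi i⟩ _ hxmem hmu, huu i, hshiftpow]
    have heq2 : ((e ⟨_, hmu2⟩ : N) : Q)
        = φ (algebraMap k[X] (RatFunc k) cc * (algebraMap k (RatFunc k) (uu (i+1)) * b (i+1)))
            * ((x ^ (i+1) : Qˣ) : Q) :=
      key (i+1) cc (a (i+1)) _ (hmi (i+1)) hmu2 (huu (i+1))
    have hsub : (⟨_, hmu⟩ : M) = ⟨_, hmu2⟩ := by
      apply Subtype.ext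
      show φ (a i) * ((x ^ i : Qˣ) : Q) * (x : Q)
        = φ (algebraMap k[X] (RatFunc k) cc * a (i+1)) * ((x ^ (i+1) : Qˣ) : Q)
      rw [hshiftpow, hcc]
    rw [hsub, heq2] at heq1
    have hrel := coeff_eq _ _ _ heq1
    refine ⟨uu i * (uu (i+1))⁻¹, mul_ne_zero (huu0 i) (inv_ne_zero (huu0 (i+1))), ?_⟩
    have hvne : algebraMap k (RatFunc k) (uu (i+1)) ≠ 0 := by
      simpa using huu0 (i+1)
    have h1 : a i * b (i+1) * algebraMap k (RatFunc k) (uu (i+1))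
        = algebraMap k (RatFunc k) (uu i) * (a (i+1) * b i) := by
      rw [hcc]
      linear_combination (a (i+1)) * hrel
    rw [map_mul, map_inv₀,
      show algebraMap k (RatFunc k) (uu i) * (algebraMap k (RatFunc k) (uu (i+1)))⁻¹
          * (a (i+1) * b i)
        = algebraMap k (RatFunc k) (uu i) * (a (i+1) * b i)
          * (algebraMap k (RatFunc k) (uu (i+1)))⁻¹ from by ring,
      eq_mul_inv_iff_mul_eq₀ hvne]
    exact h1
  · intro hlam
    have hmu2 : ∀ i : ℤ, ∃ μ : k, μ ≠ 0 ∧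
        b 0 * a i = algebraMap k (RatFunc k) μ * (a 0 * b i) := by
      intro i
      induction i using Int.induction_on with
      | zero => exact ⟨1, one_ne_zero, by rw [map_one, one_mul, mul_comm]⟩
      | succ n ih =>
        obtain ⟨μ, hμ0, hμ⟩ := ih
        obtain ⟨lam, hl0, hl⟩ := hlam n
        refine ⟨μ * lam⁻¹, mul_ne_zero hμ0 (inv_ne_zero hl0), ?_⟩
        have hlne : algebraMap k (RatFunc k) lam ≠ 0 := by simpa using hl0
        have h1 : b 0 * a ((n:ℤ)+1) * algebraMap k (RatFunc k) lam * b (n:ℤ)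
            = algebraMap k (RatFunc k) μ * (a 0 * b ((n:ℤ)+1)) * b (n:ℤ) := by
          linear_combination (b ((n:ℤ)+1)) * hμ - (b 0) * hl
        have h2 := mul_right_cancel₀ (hb (n:ℤ)) h1
        have hLne : algebraMap k (RatFunc k) lam ≠ 0 := by simpa using hl0
        rw [map_mul, map_inv₀,
          show algebraMap k (RatFunc k) μ * (algebraMap k (RatFunc k) lam)⁻¹
              * (a 0 * b ((n:ℤ)+1))
            = algebraMap k (RatFunc k) μ * (a 0 * b ((n:ℤ)+1))
              * (algebraMap k (RatFunc k) lam)⁻¹ from by ring,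
          eq_mul_inv_iff_mul_eq₀ hLne]
        exact h2
      | pred n ih =>
        obtain ⟨μ, hμ0, hμ⟩ := ih
        obtain ⟨lam, hl0, hl⟩ := hlam (-(n : ℤ) - 1)
        have hcast : (-(n:ℤ) - 1) + 1 = -(n:ℤ) := by ring
        rw [hcast] at hl
        refine ⟨μ * lam, mul_ne_zero hμ0 hl0, ?_⟩
        have h1 : b 0 * a (-(n:ℤ)-1) * b (-(n:ℤ))
            = algebraMap k (RatFunc k) μ * algebraMap k (RatFunc k) lam
                * (a 0 * b (-(n:ℤ)-1)) * b (-(n:ℤ)) := by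
          linear_combination (b 0) * hl + (algebraMap k (RatFunc k) lam * b (-(n:ℤ)-1)) * hμ
        have h2 := mul_right_cancel₀ (hb (-(n:ℤ))) h1
        rw [map_mul]
        linear_combination h2
    choose μv hμ0 hμv using hmu2
    have hg0 : b 0 * (a 0)⁻¹ ≠ 0 := mul_ne_zero (hb 0) (inv_ne_zero (ha 0))
    have hga : ∀ i, (b 0 * (a 0)⁻¹) * a i = algebraMap k (RatFunc k) (μv i) * b i := by
      intro i
      have h0 := hμv i
      rw [show b 0 * (a 0)⁻¹ * a i = b 0 * a i * (a 0)⁻¹ from by ring,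
        mul_inv_eq_iff_eq_mul₀ (ha 0)]
      linear_combination h0
    have hgb : ∀ i, (b 0 * (a 0)⁻¹)⁻¹ * b i = algebraMap k (RatFunc k) (μv i)⁻¹ * a i := by
      intro i
      have h0 := hμv i
      have hμne : algebraMap k (RatFunc k) (μv i) ≠ 0 := by simpa using hμ0 i
      rw [map_inv₀, mul_inv, inv_inv,
        show (b 0)⁻¹ * a 0 * b i = (b 0)⁻¹ * (a 0 * b i) from by ring,
        inv_mul_eq_iff_eq_mul₀ (hb 0),
        show b 0 * ((algebraMap k (RatFunc k) (μv i))⁻¹ * a i)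
          = b 0 * a i * (algebraMap k (RatFunc k) (μv i))⁻¹ from by ring,
        eq_mul_inv_iff_mul_eq₀ hμne]
      linear_combination -h0
    have hMN : ∀ w ∈ M, φ (b 0 * (a 0)⁻¹) * w ∈ N := fun w hw =>
      push_mem φ x M N a b hM hN _ (fun i => ⟨C (μv i), by rw [algC, hga]⟩) w hw
    have hNM : ∀ w ∈ N, φ (b 0 * (a 0)⁻¹)⁻¹ * w ∈ M := fun w hw =>
      push_mem φ x N M b a hN hM _ (fun i => ⟨C (μv i)⁻¹, by rw [algC, hgb]⟩) w hw
    refine ⟨⟨⟨fun m => ⟨φ (b 0 * (a 0)⁻¹) * m, hMN m m.2⟩,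
        fun n => ⟨φ (b 0 * (a 0)⁻¹)⁻¹ * n, hNM n n.2⟩, ?_, ?_⟩, ?_⟩, ?_, ?_⟩
    · intro m
      apply Subtype.ext
      show φ (b 0 * (a 0)⁻¹)⁻¹ * (φ (b 0 * (a 0)⁻¹) * (m : Q)) = m
      rw [← mul_assoc, ← map_mul, inv_mul_cancel₀ hg0, map_one, one_mul]
    · intro n
      apply Subtype.ext
      show φ (b 0 * (a 0)⁻¹) * (φ (b 0 * (a 0)⁻¹)⁻¹ * (n : Q)) = n
      rw [← mul_assoc, ← map_mul, mul_inv_cancel₀ hg0, map_one, one_mul]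
    · intro m1 m2
      apply Subtype.ext
      show φ (b 0 * (a 0)⁻¹) * ((m1 : Q) + m2) = φ (b 0 * (a 0)⁻¹) * m1 + φ (b 0 * (a 0)⁻¹) * m2
      rw [mul_add]
    · intro m u hu hmu
      show φ (b 0 * (a 0)⁻¹) * ((m : Q) * u) = (φ (b 0 * (a 0)⁻¹) * m) * u
      rw [mul_assoc]
    · rintro i m ⟨q, hq⟩
      refine ⟨(b 0 * (a 0)⁻¹) * q, ?_⟩
      show φ (b 0 * (a 0)⁻¹) * (m : Q) = _
      rw [hq, ← mul_assoc, ← map_mul]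
end

section
/- Let I = ⊕_{i∈ℤ} R a_i xⁱ be a finitely generated graded right A-submodule of Q_gr(A) with structure constants {c_i}. Then for all sufficiently large n, c_n = 1 and c_{−n} = σ^{−n}(f). Conversely, for any sequence {c_i} with each c_i ∈ k[z] monic dividing σⁱ(f), and with c_n = 1 and c_{−n} = σ^{−n}(f) for n ≫ 0, there exists a finitely generated graded submodule of Q_gr(A) with structure constants {c_i}. -/
/- Abstract model of the graded quotient division ring `Q_gr(A) = k(z)[x, x⁻¹; σ]` of the
GWA `A = k[z](σ, f)` with `σ(z) = z + 1`:  a ring `Q` together with an embedding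
`φ : k(z) → Q`, a unit `x` with `x·φ(q) = φ(σ(q))·x`, such that every element of `Q` is
uniquely a finite sum `Σ φ(q_i)·xⁱ`.  Inside `Q`, the GWA `A` is the subring generated by
`φ(k[z])`, `x` and `y = φ(σ⁻¹(f))·x⁻¹`. -/

open Polynomial

namespace S9
variable {k : Type} [Field k] {Q : Type} [Ring Q]

/-- The monomial `φ q * x^i`. -/
noncomputable def Fm (φ : RatFunc k →+* Q) (x : Qˣ) : ℤ → RatFunc k → Q :=
  fun i q => φ q * ((x ^ i : Qˣ) : Q)

variable (σ : RatFunc k ≃+* RatFunc k) (φ : RatFunc k →+* Q) (x : Qˣ)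

lemma Fm_zero (i : ℤ) : Fm φ x i 0 = 0 := by simp [Fm]

lemma Fm_add (i : ℤ) (q r : RatFunc k) : Fm φ x i (q + r) = Fm φ x i q + Fm φ x i r := by
  simp [Fm, add_mul]

lemma Fm_neg (i : ℤ) (q : RatFunc k) : Fm φ x i (-q) = -Fm φ x i q := by
  simp [Fm]

variable (hx : ∀ q : RatFunc k, (x : Q) * φ q = φ (σ q) * (x : Q))

include hx in
lemma xinv_comm (q : RatFunc k) :
    ((x⁻¹ : Qˣ) : Q) * φ q = φ (σ.symm q) * ((x⁻¹ : Qˣ) : Q) := by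
  have h := hx (σ.symm q)
  rw [RingEquiv.apply_symm_apply] at h
  calc ((x⁻¹ : Qˣ) : Q) * φ q
      = ((x⁻¹ : Qˣ) : Q) * (φ q * (x : Q)) * ((x⁻¹ : Qˣ) : Q) := by
        rw [mul_assoc, mul_assoc]; simp
    _ = ((x⁻¹ : Qˣ) : Q) * ((x : Q) * φ (σ.symm q)) * ((x⁻¹ : Qˣ) : Q) := by rw [← h]
    _ = φ (σ.symm q) * ((x⁻¹ : Qˣ) : Q) := by
        rw [← mul_assoc]; simp

include hx in
lemma x_zpow_comm (i : ℤ) (q : RatFunc k) :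
    ((x ^ i : Qˣ) : Q) * φ q = φ ((σ ^ i) q) * ((x ^ i : Qˣ) : Q) := by
  induction i using Int.induction_on generalizing q with
  | zero => simp
  | succ n ih =>
      have e1 : (σ ^ ((n : ℤ) + 1)) q = (σ ^ (n : ℤ)) (σ q) := by rw [zpow_add_one]; rfl
      rw [e1, zpow_add_one, Units.val_mul, mul_assoc, hx q, ← mul_assoc, ih (σ q), mul_assoc]
  | pred n ih =>
      have e1 : (σ ^ (-(n : ℤ) - 1)) q = (σ ^ (-(n : ℤ))) (σ.symm q) := by
        rw [zpow_sub_one]; rfl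
      rw [e1, zpow_sub_one, Units.val_mul, mul_assoc, xinv_comm σ φ x hx q, ← mul_assoc,
        ih (σ.symm q), mul_assoc]

include hx in
lemma Fm_mul (i j : ℤ) (q r : RatFunc k) :
    Fm φ x i q * Fm φ x j r = Fm φ x (i + j) (q * (σ ^ i) r) := by
  unfold Fm
  rw [map_mul, mul_assoc, ← mul_assoc ((x ^ i : Qˣ) : Q), x_zpow_comm σ φ x hx,
    mul_assoc, ← Units.val_mul, ← zpow_add, ← mul_assoc]

/-- Summation of a finsupp of coefficients, as an `AddMonoidHom`. -/
noncomputable def sumF (φ : RatFunc k →+* Q) (x : Qˣ) : (ℤ →₀ RatFunc k) →+ Q :=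
  Finsupp.liftAddHom fun i =>
    ((AddMonoidHom.mulRight ((x ^ i : Qˣ) : Q)).comp φ.toAddMonoidHom)

lemma sumF_apply (d : ℤ →₀ RatFunc k) : sumF φ x d = d.sum (Fm φ x) := rfl

lemma sumF_single (i : ℤ) (q : RatFunc k) : sumF φ x (Finsupp.single i q) = Fm φ x i q := by
  rw [sumF_apply, Finsupp.sum_single_index (Fm_zero φ x i)]

/-- The additive subgroup of `Q` of elements whose coordinates lie in prescribed
additive subgroups `P i` of `RatFunc k`. -/
noncomputable def Mset (P : ℤ → AddSubgroup (RatFunc k)) : AddSubgroup Q :=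
  AddSubgroup.closure {w | ∃ i q, q ∈ P i ∧ w = Fm φ x i q}

lemma sum_mem_Mset (P : ℤ → AddSubgroup (RatFunc k)) (d : ℤ →₀ RatFunc k)
    (hd : ∀ i, d i ∈ P i) : d.sum (Fm φ x) ∈ Mset φ x P := by
  rw [Finsupp.sum]
  exact AddSubgroup.sum_mem _ fun i hi =>
    AddSubgroup.subset_closure ⟨i, d i, hd i, rfl⟩

lemma Mset_rep {P : ℤ → AddSubgroup (RatFunc k)} {w : Q} (hw : w ∈ Mset φ x P) :
    ∃ d : ℤ →₀ RatFunc k, (∀ i, d i ∈ P i) ∧ w = d.sum (Fm φ x) := by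
  induction hw using AddSubgroup.closure_induction with
  | mem w hw =>
      obtain ⟨i, q, hq, rfl⟩ := hw
      refine ⟨Finsupp.single i q, fun j => ?_, (sumF_single φ x i q).symm⟩
      rcases eq_or_ne j i with rfl | hne
      · rwa [Finsupp.single_eq_same]
      · rw [Finsupp.single_eq_of_ne' (Ne.symm hne)]; exact zero_mem _
  | zero => exact ⟨0, fun i => zero_mem _, by simp⟩
  | add w v _ _ ihw ihv =>
      obtain ⟨d, hd, rfl⟩ := ihw
      obtain ⟨e, he, rfl⟩ := ihv
      exact ⟨d + e, fun i => by simpa using add_mem (hd i) (he i),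
        by rw [← sumF_apply, ← sumF_apply, ← sumF_apply, map_add]⟩
  | neg w _ ihw =>
      obtain ⟨d, hd, rfl⟩ := ihw
      exact ⟨-d, fun i => by simpa using neg_mem (hd i),
        by rw [← sumF_apply, ← sumF_apply, map_neg]⟩

include hx in
lemma Mset_mul {P P' P'' : ℤ → AddSubgroup (RatFunc k)}
    (hconv : ∀ i j q r, q ∈ P i → r ∈ P' j → q * (σ ^ i) r ∈ P'' (i + j))
    {w u : Q} (hw : w ∈ Mset φ x P) (hu : u ∈ Mset φ x P') :
    w * u ∈ Mset φ x P'' := by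
  induction hw using AddSubgroup.closure_induction with
  | mem w hwm =>
      obtain ⟨i, q, hq, rfl⟩ := hwm
      induction hu using AddSubgroup.closure_induction with
      | mem u hum =>
          obtain ⟨j, r, hr, rfl⟩ := hum
          rw [Fm_mul σ φ x hx]
          exact AddSubgroup.subset_closure ⟨i + j, _, hconv i j q r hq hr, rfl⟩
      | zero => rw [mul_zero]; exact zero_mem _
      | add u v _ _ ihu ihv => rw [mul_add]; exact add_mem ihu ihv
      | neg u _ ihu => rw [mul_neg]; exact neg_mem ihu
  | zero => rw [zero_mul]; exact zero_mem _
  | add w v _ _ ihw ihv => rw [add_mul]; exact add_mem ihw ihv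
  | neg w _ ihw => rw [neg_mul]; exact neg_mem ihw

variable (hbasis : ∀ w : Q, ∃! c : ℤ →₀ RatFunc k,
    w = c.sum fun i q => φ q * ((x ^ i : Qˣ) : Q))

include hbasis in
lemma rep_unique {d e : ℤ →₀ RatFunc k} (h : d.sum (Fm φ x) = e.sum (Fm φ x)) : d = e := by
  have hb : ∀ w : Q, ∃! c : ℤ →₀ RatFunc k, w = c.sum (Fm φ x) := hbasis
  obtain ⟨c, -, hc⟩ := hb (d.sum (Fm φ x))
  have h1 : d = c := hc d rfl
  have h2 : e = c := hc e h
  rw [h1, h2]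

/-! ### Polynomial shift lemmas -/

lemma pshift_pshift' (i j : ℤ) (p : k[X]) : pshift k i (pshift k j p) = pshift k (i+j) p := by
  simp only [pshift, comp_assoc, add_comp, X_comp, C_comp]
  push_cast
  rw [C_add, add_assoc]

lemma pshift_zero' (p : k[X]) : pshift k 0 p = p := by simp [pshift]

lemma pshift_one' (i : ℤ) : pshift k i (1 : k[X]) = 1 := by simp [pshift]

lemma pshift_mul (i : ℤ) (p q : k[X]) : pshift k i (p * q) = pshift k i p * pshift k i q := by
  simp [pshift, mul_comp]

lemma pshift_dvd (i : ℤ) {p q : k[X]} (h : p ∣ q) : pshift k i p ∣ pshift k i q := by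
  obtain ⟨r, rfl⟩ := h; exact ⟨pshift k i r, pshift_mul i p r⟩

lemma pshift_prod (i : ℤ) (s : Finset ℤ) (g : ℤ → k[X]) :
    pshift k i (∏ t ∈ s, g t) = ∏ t ∈ s, pshift k i (g t) := by
  show aeval (X + C (i:k)) _ = _
  rw [map_prod]; rfl

lemma pshift_one_eq (p : k[X]) : pshift k 1 p = p.comp (X + 1) := by
  simp [pshift]

variable (hσ : ∀ p : k[X], σ (algebraMap k[X] (RatFunc k) p)
    = algebraMap k[X] (RatFunc k) (p.comp (X + 1)))

include hσ in
lemma symm_alg (p : k[X]) :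
    σ.symm (algebraMap k[X] (RatFunc k) p) = algebraMap k[X] (RatFunc k) (pshift k (-1) p) := by
  have h2 : σ (algebraMap k[X] (RatFunc k) (pshift k (-1) p))
      = algebraMap k[X] (RatFunc k) p := by
    rw [hσ, ← pshift_one_eq, pshift_pshift']
    norm_num [pshift_zero']
  rw [← h2, RingEquiv.symm_apply_apply]

include hσ in
lemma sigma_alg (i : ℤ) (p : k[X]) :
    (σ ^ i) (algebraMap k[X] (RatFunc k) p) = algebraMap k[X] (RatFunc k) (pshift k i p) := by
  induction i using Int.induction_on generalizing p with
  | zero => rw [pshift_zero', zpow_zero]; rfl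
  | succ n ih =>
      have e1 : (σ ^ ((n : ℤ) + 1)) (algebraMap k[X] (RatFunc k) p)
          = (σ ^ (n : ℤ)) (σ (algebraMap k[X] (RatFunc k) p)) := by rw [zpow_add_one]; rfl
      rw [e1, hσ, ← pshift_one_eq, ih, pshift_pshift']
  | pred n ih =>
      have e1 : (σ ^ (-(n : ℤ) - 1)) (algebraMap k[X] (RatFunc k) p)
          = (σ ^ (-(n : ℤ))) (σ.symm (algebraMap k[X] (RatFunc k) p)) := by
        rw [zpow_sub_one]; rfl
      rw [e1, symm_alg σ hσ, ih, pshift_pshift']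
      have e2 : -(n:ℤ) + -1 = -(n:ℤ) - 1 := by omega
      rw [e2]

/-! ### Interval products -/

lemma prod_Ico_split {a b c : ℤ} (h1 : a ≤ b) (h2 : b ≤ c) (g : ℤ → k[X]) :
    ∏ t ∈ Finset.Ico a c, g t
      = (∏ t ∈ Finset.Ico a b, g t) * ∏ t ∈ Finset.Ico b c, g t := by
  rw [← Finset.Ico_union_Ico_eq_Ico h1 h2,
    Finset.prod_union (Finset.Ico_disjoint_Ico_consecutive a b c)]

lemma prod_Ico_bot {a b : ℤ} (h : a < b) (g : ℤ → k[X]) :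
    ∏ t ∈ Finset.Ico a b, g t = g a * ∏ t ∈ Finset.Ico (a+1) b, g t := by
  rw [prod_Ico_split (by omega : a ≤ a + 1) (by omega : a + 1 ≤ b) g]
  congr 1
  have : Finset.Ico a (a+1) = {a} := by ext t; simp; omega
  rw [this, Finset.prod_singleton]

/-! ### The subring bound `A ⊆ B` -/

variable (f : k[X])

/-- `gprod f m = ∏_{m ≤ t < 0} σ^t f`. -/
noncomputable def gprod (m : ℤ) : k[X] := ∏ t ∈ Finset.Ico m 0, pshift k t f

lemma gprod_def (m : ℤ) : gprod f m = ∏ t ∈ Finset.Ico m 0, pshift k t f := rfl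

lemma gprod_nonneg {m : ℤ} (h : 0 ≤ m) : gprod f m = 1 := by
  rw [gprod_def, Finset.Ico_eq_empty (by omega), Finset.prod_empty]

lemma pshift_gprod (i j : ℤ) :
    pshift k i (gprod f j) = ∏ t ∈ Finset.Ico (j+i) i, pshift k t f := by
  rw [gprod_def, pshift_prod]
  rw [show Finset.Ico (j+i) i = Finset.Ico (j+i) (0+i) by norm_num,
    ← Finset.map_add_right_Ico, Finset.prod_map]
  refine Finset.prod_congr rfl fun t _ => ?_
  show pshift k i (pshift k t f) = pshift k (t + i) f
  rw [pshift_pshift', add_comm]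

lemma gprod_key (i j : ℤ) : gprod f (i+j) ∣ gprod f i * pshift k i (gprod f j) := by
  rw [pshift_gprod]
  rcases le_or_gt 0 i with hi | hi
  · rw [gprod_def]
    refine Dvd.dvd.mul_left ?_ _
    exact Finset.prod_dvd_prod_of_subset _ _ _ (Finset.Ico_subset_Ico (by omega) hi)
  · rcases le_or_gt 0 j with hj | hj
    · rw [gprod_def, gprod_def]
      refine Dvd.dvd.mul_right ?_ _
      exact Finset.prod_dvd_prod_of_subset _ _ _ (Finset.Ico_subset_Ico (by omega) le_rfl)
    · rw [gprod_def, gprod_def, add_comm j i, mul_comm,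
        ← prod_Ico_split (by omega : i + j ≤ i) (by omega : i ≤ 0) (fun t => pshift k t f)]

/-- The coefficient constraints cutting out (a superset of) the GWA `A` inside `Q`. -/
noncomputable def PB : ℤ → AddSubgroup (RatFunc k) := fun m =>
  { carrier := {q | ∃ p : k[X], gprod f m ∣ p ∧ q = algebraMap k[X] (RatFunc k) p}
    zero_mem' := ⟨0, dvd_zero _, (map_zero _).symm⟩
    add_mem' := by
      rintro q r ⟨p, hp, rfl⟩ ⟨p', hp', rfl⟩
      exact ⟨p + p', dvd_add hp hp', (map_add _ _ _).symm⟩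
    neg_mem' := by
      rintro q ⟨p, hp, rfl⟩
      exact ⟨-p, dvd_neg.2 hp, (map_neg _ _).symm⟩ }

lemma PB_mem {m : ℤ} {q : RatFunc k} :
    q ∈ PB f m ↔ ∃ p : k[X], gprod f m ∣ p ∧ q = algebraMap k[X] (RatFunc k) p := Iff.rfl

include hσ in
lemma PB_conv (i j : ℤ) (q r : RatFunc k) (hq : q ∈ PB f i) (hr : r ∈ PB f j) :
    q * (σ ^ i) r ∈ PB f (i + j) := by
  obtain ⟨p, hp, rfl⟩ := hq
  obtain ⟨p', hp', rfl⟩ := hr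
  refine ⟨p * pshift k i p', ?_, by rw [sigma_alg σ hσ, map_mul]⟩
  exact (gprod_key f i j).trans (mul_dvd_mul hp (pshift_dvd i hp'))

lemma gprod_neg_one : gprod f (-1) = pshift k (-1) f := by
  rw [gprod_def, prod_Ico_bot (by omega : (-1:ℤ) < 0)]
  norm_num

lemma prod_Ico_top {a b : ℤ} (h : a ≤ b) (g : ℤ → k[X]) :
    ∏ t ∈ Finset.Ico a (b+1), g t = (∏ t ∈ Finset.Ico a b, g t) * g b := by
  rw [prod_Ico_split h (by omega : b ≤ b + 1) g]
  congr 1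
  have : Finset.Ico b (b+1) = {b} := by ext t; simp; omega
  rw [this, Finset.prod_singleton]

/-! ### Monomial shapes of the generators -/

lemma x_eq : (x : Q) = Fm φ x 1 1 := by simp [Fm]

lemma phi_eq (q : RatFunc k) : φ q = Fm φ x 0 q := by simp [Fm]

lemma one_eq : (1 : Q) = Fm φ x 0 1 := by simp [Fm]

include hσ in
lemma y_eq : gwaY k Q σ φ x f
    = Fm φ x (-1) (algebraMap k[X] (RatFunc k) (pshift k (-1) f)) := by
  rw [gwaY, symm_alg σ hσ, Fm]
  norm_num

include hσ hx in
lemma gwaY_pow (m : ℕ) : (gwaY k Q σ φ x f) ^ m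
    = Fm φ x (-(m:ℤ)) (algebraMap k[X] (RatFunc k) (gprod f (-(m:ℤ)))) := by
  induction m with
  | zero => simp [Fm, gprod_nonneg]
  | succ m ih =>
      rw [pow_succ, ih, y_eq σ φ x hσ f, Fm_mul σ φ x hx, sigma_alg σ hσ, ← map_mul,
        pshift_pshift']
      have e1 : -(m:ℤ) + -1 = -((m:ℕ)+1:ℕ) := by push_cast; ring
      have e2 : gprod f (-(m:ℤ)) * pshift k (-(m:ℤ) + -1) f = gprod f (-((m:ℕ)+1:ℕ)) := by
        rw [gprod_def, gprod_def, show (-((m:ℕ)+1:ℕ) : ℤ) = (-(m:ℤ)-1) by push_cast; ring,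
          prod_Ico_bot (by omega : -(m:ℤ)-1 < 0),
          show -(m:ℤ)-1+1 = -(m:ℤ) by omega, mul_comm,
          show -(m:ℤ) + -1 = -(m:ℤ)-1 by omega]
      rw [e2, e1]

/-! ### Membership of generators in `A` -/

lemma x_mem : (x : Q) ∈ gwaSubring k Q σ φ x f :=
  Subring.subset_closure (Or.inl (Set.mem_insert _ _))

lemma y_mem : gwaY k Q σ φ x f ∈ gwaSubring k Q σ φ x f :=
  Subring.subset_closure (Or.inl (Set.mem_insert_iff.2 (Or.inr rfl)))

lemma phi_mem (p : k[X]) :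
    φ (algebraMap k[X] (RatFunc k) p) ∈ gwaSubring k Q σ φ x f :=
  Subring.subset_closure (Or.inr ⟨p, rfl⟩)

/-! ### `A ⊆ B` -/

include hσ hx in
lemma gwa_sub_B : ∀ u ∈ gwaSubring k Q σ φ x f, u ∈ Mset φ x (PB f) := by
  intro u hu
  induction hu using Subring.closure_induction with
  | mem u hu =>
      simp only [Set.mem_union, Set.mem_insert_iff, Set.mem_singleton_iff,
        Set.mem_range] at hu
      rcases hu with (rfl | rfl) | ⟨p, rfl⟩
      · exact AddSubgroup.subset_closure
          ⟨1, 1, ⟨1, by rw [gprod_nonneg f (by omega : (0:ℤ) ≤ 1)], (map_one _).symm⟩,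
            x_eq φ x⟩
      · exact AddSubgroup.subset_closure
          ⟨-1, _, ⟨pshift k (-1) f, by rw [gprod_neg_one], rfl⟩, y_eq σ φ x hσ f⟩
      · exact AddSubgroup.subset_closure
          ⟨0, _, ⟨p, by rw [gprod_nonneg f le_rfl]; exact one_dvd _, rfl⟩, phi_eq φ x _⟩
  | zero => exact zero_mem _
  | one =>
      exact AddSubgroup.subset_closure
        ⟨0, 1, ⟨1, by rw [gprod_nonneg f le_rfl], (map_one _).symm⟩, one_eq φ x⟩
  | add u v _ _ ihu ihv => exact add_mem ihu ihv
  | neg u _ ihu => exact neg_mem ihu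
  | mul u v _ _ ihu ihv =>
      exact Mset_mul σ φ x hx (fun i j q r hq hr => PB_conv σ hσ f i j q r hq hr) ihu ihv

/-! ### Coefficient subgroups `R·a_i` -/

noncomputable def Pa (a : ℤ → RatFunc k) : ℤ → AddSubgroup (RatFunc k) := fun i =>
  { carrier := {q | ∃ p : k[X], q = algebraMap k[X] (RatFunc k) p * a i}
    zero_mem' := ⟨0, by simp⟩
    add_mem' := by
      rintro q r ⟨p, rfl⟩ ⟨p', rfl⟩
      exact ⟨p + p', by rw [map_add, add_mul]⟩
    neg_mem' := by
      rintro q ⟨p, rfl⟩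
      exact ⟨-p, by rw [map_neg, neg_mul]⟩ }

lemma Pa_mem {a : ℤ → RatFunc k} {i : ℤ} {q : RatFunc k} :
    q ∈ Pa a i ↔ ∃ p : k[X], q = algebraMap k[X] (RatFunc k) p * a i := Iff.rfl

lemma a_rel {a : ℤ → RatFunc k} {cc : ℤ → k[X]}
    (hstep : ∀ i, a i = algebraMap k[X] (RatFunc k) (cc i) * a (i+1)) :
    ∀ i j : ℤ, i ≤ j →
      a i = algebraMap k[X] (RatFunc k) (∏ t ∈ Finset.Ico i j, cc t) * a j := by
  intro i
  refine Int.le_induction ?_ ?_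
  · rw [Finset.Ico_self, Finset.prod_empty, map_one, one_mul]
  · intro j hij ih
    rw [prod_Ico_top hij, map_mul, mul_assoc, ← hstep j, ih]

/-! ### Coefficient extraction machinery -/

include hbasis in
lemma Mset_coeff {P : ℤ → AddSubgroup (RatFunc k)} {d : ℤ →₀ RatFunc k}
    (h : d.sum (Fm φ x) ∈ Mset φ x P) : ∀ i, d i ∈ P i := by
  obtain ⟨e, he, heq⟩ := Mset_rep φ x h
  intro i
  rw [rep_unique φ x hbasis heq]
  exact he i

include hbasis in
lemma Fm_coeff {P : ℤ → AddSubgroup (RatFunc k)} {t₀ : ℤ} {v : RatFunc k}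
    (h : Fm φ x t₀ v ∈ Mset φ x P) : v ∈ P t₀ := by
  have h2 : (Finsupp.single t₀ v).sum (Fm φ x) ∈ Mset φ x P := by
    rwa [← sumF_apply, sumF_single]
  have := Mset_coeff φ x hbasis h2 t₀
  rwa [Finsupp.single_eq_same] at this

include hσ hx hbasis in
lemma coord_extract {P : ℤ → AddSubgroup (RatFunc k)} {W : Set Q} {t₀ : ℤ}
    {G : AddSubgroup (RatFunc k)}
    (hW : ∀ w ∈ W, ∃ s u : Q, s ∈ Mset φ x P ∧ u ∈ gwaSubring k Q σ φ x f ∧ w = s * u)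
    (hconv : ∀ i j q r, q ∈ P i → r ∈ PB f j → i + j = t₀ → q * (σ ^ i) r ∈ G)
    {v : RatFunc k}
    (hv : Fm φ x t₀ v ∈ AddSubgroup.closure W) :
    v ∈ G := by
  set P'' : ℤ → AddSubgroup (RatFunc k) := fun t => if t = t₀ then G else ⊤ with hP''
  have hle : AddSubgroup.closure W ≤ Mset φ x P'' := by
    rw [AddSubgroup.closure_le]
    intro w hw
    obtain ⟨s, u, hs, hu, rfl⟩ := hW w hw
    refine Mset_mul σ φ x hx (fun i j q r hq hr => ?_) hs
      (gwa_sub_B σ φ x hx hσ f u hu)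
    by_cases hij : i + j = t₀
    · simp only [hP'', hij, if_pos rfl]
      exact hconv i j q r hq hr hij
    · simp only [hP'', if_neg hij]
      exact AddSubgroup.mem_top _
  have := Fm_coeff φ x hbasis (hle hv)
  simpa [hP''] using this

end S9

open S9 in
/-- For a finitely generated graded submodule `I = ⊕ R·a_i·xⁱ` of
`Q_gr(A)` with structure constants `c_i = a_i a_{i+1}⁻¹`, one has `c_n = 1` and
`c_{−n} = σ^{−n}(f)` for all `n ≫ 0` (up to nonzero scalars of `k`).  Conversely, any
sequence of monic `c_i ∈ k[z]` with `c_i ∣ σⁱ(f)`, `c_n = 1` and `c_{−n} = σ^{−n}(f)`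
for `n ≫ 0`, arises as the sequence of structure constants of a finitely generated
graded right `A`-submodule of `Q_gr(A)`. -/
theorem fg_iff_structure_constants
    (k : Type) [Field k] [CharZero k] [IsAlgClosed k]
    (Q : Type) [Ring Q]
    (σ : RatFunc k ≃+* RatFunc k)
    (hσ : ∀ p : k[X], σ (algebraMap k[X] (RatFunc k) p)
        = algebraMap k[X] (RatFunc k) (p.comp (X + 1)))
    (φ : RatFunc k →+* Q) (hφ : Function.Injective φ)
    (x : Qˣ)
    (hx : ∀ q : RatFunc k, (x : Q) * φ q = φ (σ q) * (x : Q))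
    (hbasis : ∀ w : Q, ∃! c : ℤ →₀ RatFunc k,
        w = c.sum fun i q => φ q * ((x ^ i : Qˣ) : Q))
    (f : k[X]) (hf : f.Monic) (hf0 : f ≠ 0)
    :
    (∀ (M : AddSubgroup Q) (a : ℤ → RatFunc k), (∀ i, a i ≠ 0) →
      (∀ w : Q, w ∈ M ↔
        ∃ c : ℤ →₀ RatFunc k,
          (∀ i, ∃ p : k[X], c i = algebraMap k[X] (RatFunc k) p * a i) ∧
            w = c.sum fun i q => φ q * ((x ^ i : Qˣ) : Q)) →
      (∀ w ∈ M, ∀ u ∈ gwaSubring k Q σ φ x f, w * u ∈ M) →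
      (∃ S : Finset Q, (↑S : Set Q) ⊆ M ∧
        ∀ w ∈ M, w ∈ AddSubgroup.closure
          {v : Q | ∃ s ∈ S, ∃ u ∈ gwaSubring k Q σ φ x f, v = s * u}) →
      ∃ N : ℕ, ∀ n : ℤ, (N : ℤ) ≤ n →
        (∃ lam : k, lam ≠ 0 ∧ a n = algebraMap k (RatFunc k) lam * a (n + 1)) ∧
          ∃ lam : k, lam ≠ 0 ∧
            a (-n) = algebraMap k (RatFunc k) lam *
              (algebraMap k[X] (RatFunc k) (pshift k (-n) f) * a (-n + 1))) ∧
      ∀ c : ℤ → k[X], (∀ i, (c i).Monic ∧ c i ∣ pshift k i f) →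
        (∃ N : ℕ, ∀ n : ℤ, (N : ℤ) ≤ n → c n = 1 ∧ c (-n) = pshift k (-n) f) →
        ∃ (M : AddSubgroup Q) (a : ℤ → RatFunc k),
          (∀ i, a i ≠ 0) ∧
            (∀ i, a i = algebraMap k[X] (RatFunc k) (c i) * a (i + 1)) ∧
              (∀ w : Q, w ∈ M ↔
                ∃ d : ℤ →₀ RatFunc k,
                  (∀ i, ∃ p : k[X], d i = algebraMap k[X] (RatFunc k) p * a i) ∧
                    w = d.sum fun i q => φ q * ((x ^ i : Qˣ) : Q)) ∧
                (∀ w ∈ M, ∀ u ∈ gwaSubring k Q σ φ x f, w * u ∈ M) ∧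
                  ∃ S : Finset Q, (↑S : Set Q) ⊆ M ∧
                    ∀ w ∈ M, w ∈ AddSubgroup.closure
                      {v : Q | ∃ s ∈ S, ∃ u ∈ gwaSubring k Q σ φ x f, v = s * u} := by
  classical
  have alginj : Function.Injective (algebraMap k[X] (RatFunc k)) :=
    RatFunc.algebraMap_injective k
  constructor
  · -- Forward direction
    rintro M a ha0 hMiff hMA ⟨S, hSsub, hgen⟩
    have memM : ∀ d : ℤ →₀ RatFunc k, (∀ i, d i ∈ Pa a i) → d.sum (Fm φ x) ∈ M := by
      intro d hd
      exact (hMiff _).2 ⟨d, fun i => hd i, rfl⟩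
    have Mrep : ∀ w, w ∈ M →
        ∃ d : ℤ →₀ RatFunc k, (∀ i, d i ∈ Pa a i) ∧ w = d.sum (Fm φ x) := by
      intro w hw
      obtain ⟨c, h1, h2⟩ := (hMiff w).1 hw
      exact ⟨c, fun i => h1 i, h2⟩
    have fact1 : ∀ i, Fm φ x i (a i) ∈ M := by
      intro i
      have h : (Finsupp.single i (a i)).sum (Fm φ x) ∈ M := by
        refine memM _ fun j => ?_
        rcases eq_or_ne j i with rfl | hne
        · rw [Finsupp.single_eq_same]; exact ⟨1, by rw [map_one, one_mul]⟩
        · rw [Finsupp.single_eq_of_ne' (Ne.symm hne)]; exact zero_mem _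
      rwa [← sumF_apply, sumF_single] at h
    have coeffM : ∀ (i : ℤ) (v : RatFunc k), Fm φ x i v ∈ M → v ∈ Pa a i := by
      intro i v hv
      obtain ⟨d, hd, heq⟩ := Mrep _ hv
      refine Fm_coeff φ x hbasis (P := Pa a) ?_
      rw [heq]
      exact sum_mem_Mset φ x _ _ hd
    -- structure constants
    have hcc : ∀ i : ℤ, ∃ p : k[X], a i = algebraMap k[X] (RatFunc k) p * a (i+1) := by
      intro i
      have h1 : Fm φ x i (a i) * (x:Q) ∈ M := hMA _ (fact1 i) _ (x_mem σ φ x f)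
      have h2 : Fm φ x i (a i) * (x:Q) = Fm φ x (i+1) (a i) := by
        rw [x_eq φ x, Fm_mul σ φ x hx, map_one, mul_one]
      rw [h2] at h1
      exact coeffM _ _ h1
    choose cc hcca using hcc
    have hcc0 : ∀ i, cc i ≠ 0 := by
      intro i h
      exact ha0 i (by rw [hcca i, h, map_zero, zero_mul])
    have hrr : ∀ i : ℤ, ∃ p : k[X], pshift k i f = cc i * p := by
      intro i
      have h1 : Fm φ x (i+1) (a (i+1)) * gwaY k Q σ φ x f ∈ M :=
        hMA _ (fact1 (i+1)) _ (y_mem σ φ x f)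
      have h2 : Fm φ x (i+1) (a (i+1)) * gwaY k Q σ φ x f
          = Fm φ x i (a (i+1) * algebraMap k[X] (RatFunc k) (pshift k i f)) := by
        rw [y_eq σ φ x hσ f, Fm_mul σ φ x hx, sigma_alg σ hσ, pshift_pshift']
        have e1 : (i+1) + -1 = i := by omega
        rw [e1]
      rw [h2] at h1
      obtain ⟨p, hp⟩ := coeffM _ _ h1
      rw [hcca i] at hp
      have hp2 : algebraMap k[X] (RatFunc k) (pshift k i f) * a (i+1)
          = algebraMap k[X] (RatFunc k) (cc i * p) * a (i+1) := by
        rw [map_mul]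
        linear_combination hp
      have := alginj (mul_right_cancel₀ (ha0 (i+1)) hp2)
      exact ⟨p, this⟩
    choose rr hrra using hrr
    -- bound on the degrees of the generators
    have hrepS : ∀ s ∈ S, ∃ d : ℤ →₀ RatFunc k,
        (∀ i, d i ∈ Pa a i) ∧ s = d.sum (Fm φ x) := fun s hs => Mrep s (hSsub hs)
    choose! ds hds1 hds2 using hrepS
    set D : ℕ := S.sup fun s => (ds s).support.sup fun t => t.natAbs with hD
    have hDs : ∀ s ∈ S, ∀ i : ℤ, ¬ (i.natAbs ≤ D) → ds s i = 0 := by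
      intro s hs i hi
      by_contra h
      exact hi (le_trans (Finset.le_sup (Finsupp.mem_support_iff.2 h))
        (Finset.le_sup (f := fun s => (ds s).support.sup fun t => t.natAbs) hs))
    set PS : ℤ → AddSubgroup (RatFunc k) :=
      fun j => if j.natAbs ≤ D then Pa a j else ⊥ with hPS
    have hSmem : ∀ s ∈ S, s ∈ Mset φ x PS := by
      intro s hs
      rw [hds2 s hs]
      refine sum_mem_Mset φ x _ _ fun i => ?_
      by_cases h : i.natAbs ≤ D
      · simp only [hPS, if_pos h]; exact hds1 s hs i
      · simp only [hPS, if_neg h]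
        rw [hDs s hs i h]
        exact zero_mem _
    have hW : ∀ w ∈ {v : Q | ∃ s ∈ S, ∃ u ∈ gwaSubring k Q σ φ x f, v = s * u},
        ∃ s u : Q, s ∈ Mset φ x PS ∧ u ∈ gwaSubring k Q σ φ x f ∧ w = s * u := by
      rintro w ⟨s, hs, u, hu, rfl⟩
      exact ⟨s, u, hSmem s hs, hu, rfl⟩
    refine ⟨D + 1, fun n hn => ⟨?_, ?_⟩⟩
    · -- positive side: cc n is a unit
      set G : AddSubgroup (RatFunc k) :=
        Pa (fun _ => algebraMap k[X] (RatFunc k) (∏ t ∈ Finset.Ico (D:ℤ) (n+1), cc t)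
          * a (n+1)) 0 with hG
      have hconv : ∀ i j q r, q ∈ PS i → r ∈ PB f j → i + j = n + 1 →
          q * (σ ^ i) r ∈ G := by
        intro i j q r hq hr hij
        by_cases hiD : i.natAbs ≤ D
        · replace hq : q ∈ (if i.natAbs ≤ D then Pa a i else ⊥ : AddSubgroup (RatFunc k)) := hq
          rw [if_pos hiD] at hq
          obtain ⟨p, rfl⟩ := hq
          obtain ⟨p', hdvd, rfl⟩ := hr
          have hiD' : i ≤ (D:ℤ) := le_trans Int.le_natAbs (by exact_mod_cast hiD)
          have harel := a_rel hcca i (n+1) (by omega)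
          rw [prod_Ico_split hiD' (by omega : (D:ℤ) ≤ n+1)] at harel
          refine ⟨p * pshift k i p' * ∏ t ∈ Finset.Ico i (D:ℤ), cc t, ?_⟩
          rw [sigma_alg σ hσ, harel]
          simp only [map_mul]
          ring
        · replace hq : q ∈ (if i.natAbs ≤ D then Pa a i else ⊥ : AddSubgroup (RatFunc k)) := hq
          rw [if_neg hiD, AddSubgroup.mem_bot] at hq
          rw [hq, zero_mul]
          exact zero_mem _
      have hkey : a (n+1) ∈ G :=
        coord_extract σ φ x hx hbasis hσ f hW hconv (hgen _ (fact1 (n+1)))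
      obtain ⟨p, hp⟩ := hkey
      replace hp : a (n+1) = algebraMap k[X] (RatFunc k) p
          * (algebraMap k[X] (RatFunc k) (∏ t ∈ Finset.Ico (D:ℤ) (n+1), cc t) * a (n+1)) := hp
      have h1 : algebraMap k[X] (RatFunc k)
          (p * ∏ t ∈ Finset.Ico (D:ℤ) (n+1), cc t) * a (n+1) = 1 * a (n+1) := by
        rw [map_mul, one_mul]
        linear_combination -hp
      have h2 : p * ∏ t ∈ Finset.Ico (D:ℤ) (n+1), cc t = 1 := by
        apply alginj
        rw [map_one]
        exact mul_right_cancel₀ (ha0 (n+1)) h1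
      have hnmem : n ∈ Finset.Ico (D:ℤ) (n+1) := by
        simp only [Finset.mem_Ico]
        omega
      have hunit : IsUnit (cc n) := by
        have := Finset.mul_prod_erase _ cc hnmem
        refine isUnit_of_mul_isUnit_left (y := (∏ t ∈ (Finset.Ico (D:ℤ) (n+1)).erase n, cc t)) ?_
        rw [this]
        exact IsUnit.of_mul_eq_one p (by linear_combination h2)
      obtain ⟨lam, hlamu, hlamC⟩ := Polynomial.isUnit_iff.1 hunit
      refine ⟨lam, hlamu.ne_zero, ?_⟩
      have : algebraMap k[X] (RatFunc k) (C lam) = algebraMap k (RatFunc k) lam := by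
        rw [← Polynomial.algebraMap_eq, ← IsScalarTower.algebraMap_apply]
      rw [hcca n, ← hlamC, this]
    · -- negative side
      set G : AddSubgroup (RatFunc k) :=
        Pa (fun _ => algebraMap k[X] (RatFunc k) (∏ t ∈ Finset.Ico (-n) (-(D:ℤ)), rr t)
          * a (-n)) 0 with hG
      have hconv : ∀ i j q r, q ∈ PS i → r ∈ PB f j → i + j = -n →
          q * (σ ^ i) r ∈ G := by
        intro i j q r hq hr hij
        by_cases hiD : i.natAbs ≤ D
        · replace hq : q ∈ (if i.natAbs ≤ D then Pa a i else ⊥ : AddSubgroup (RatFunc k)) := hq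
          rw [if_pos hiD] at hq
          obtain ⟨p, rfl⟩ := hq
          obtain ⟨p', ⟨h, rfl⟩, rfl⟩ := hr
          have hiD1 : i ≤ (D:ℤ) := le_trans Int.le_natAbs (by exact_mod_cast hiD)
          have hiD2 : -(D:ℤ) ≤ i := by
            have := Int.le_natAbs (a := -i)
            omega
          have harel := a_rel hcca (-n) i (by omega)
          -- pshift i (gprod f j * h) = (∏_{Ico (-n) i} pshift t f) * pshift i h
          have e1 : pshift k i (gprod f j * h)
              = (∏ t ∈ Finset.Ico (-n) i, pshift k t f) * pshift k i h := by
            rw [pshift_mul, pshift_gprod, show j + i = -n by omega]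
          have e2 : ∏ t ∈ Finset.Ico (-n) i, pshift k t f
              = (∏ t ∈ Finset.Ico (-n) i, cc t) * ∏ t ∈ Finset.Ico (-n) i, rr t := by
            rw [← Finset.prod_mul_distrib]
            exact Finset.prod_congr rfl fun t _ => hrra t
          have e3 : ∏ t ∈ Finset.Ico (-n) i, rr t
              = (∏ t ∈ Finset.Ico (-n) (-(D:ℤ)), rr t)
                * ∏ t ∈ Finset.Ico (-(D:ℤ)) i, rr t := by
            rw [← prod_Ico_split (by omega) hiD2]
          refine ⟨p * pshift k i h * ∏ t ∈ Finset.Ico (-(D:ℤ)) i, rr t, ?_⟩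
          rw [sigma_alg σ hσ, e1, e2, e3, harel]
          simp only [map_mul]
          ring
        · replace hq : q ∈ (if i.natAbs ≤ D then Pa a i else ⊥ : AddSubgroup (RatFunc k)) := hq
          rw [if_neg hiD, AddSubgroup.mem_bot] at hq
          rw [hq, zero_mul]
          exact zero_mem _
      have hkey : a (-n) ∈ G :=
        coord_extract σ φ x hx hbasis hσ f hW hconv (hgen _ (fact1 (-n)))
      obtain ⟨p, hp⟩ := hkey
      replace hp : a (-n) = algebraMap k[X] (RatFunc k) p
          * (algebraMap k[X] (RatFunc k) (∏ t ∈ Finset.Ico (-n) (-(D:ℤ)), rr t) * a (-n)) := hp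
      have h1 : algebraMap k[X] (RatFunc k)
          (p * ∏ t ∈ Finset.Ico (-n) (-(D:ℤ)), rr t) * a (-n) = 1 * a (-n) := by
        rw [map_mul, one_mul]
        linear_combination -hp
      have h2 : p * ∏ t ∈ Finset.Ico (-n) (-(D:ℤ)), rr t = 1 := by
        apply alginj
        rw [map_one]
        exact mul_right_cancel₀ (ha0 (-n)) h1
      have hnmem : -n ∈ Finset.Ico (-n) (-(D:ℤ)) := by
        simp only [Finset.mem_Ico]
        omega
      have hunit : IsUnit (rr (-n)) := by
        have := Finset.mul_prod_erase _ rr hnmem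
        refine isUnit_of_mul_isUnit_left
          (y := (∏ t ∈ (Finset.Ico (-n) (-(D:ℤ))).erase (-n), rr t)) ?_
        rw [this]
        exact IsUnit.of_mul_eq_one p (by linear_combination h2)
      obtain ⟨mu, hmuu, hmuC⟩ := Polynomial.isUnit_iff.1 hunit
      have hmu0 : (mu : k) ≠ 0 := hmuu.ne_zero
      refine ⟨mu⁻¹, inv_ne_zero hmu0, ?_⟩
      have hCmu : algebraMap k[X] (RatFunc k) (C mu) = algebraMap k (RatFunc k) mu := by
        rw [← Polynomial.algebraMap_eq, ← IsScalarTower.algebraMap_apply]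
      have hps : algebraMap k[X] (RatFunc k) (pshift k (-n) f)
          = algebraMap k (RatFunc k) mu * algebraMap k[X] (RatFunc k) (cc (-n)) := by
        rw [hrra (-n), ← hmuC, map_mul, hCmu]
        ring
      have hmu1 : algebraMap k (RatFunc k) mu⁻¹ * algebraMap k (RatFunc k) mu = 1 := by
        rw [← map_mul, inv_mul_cancel₀ hmu0, map_one]
      rw [hcca (-n), hps]
      linear_combination (-(algebraMap k[X] (RatFunc k) (cc (-n)) * a (-n+1))) * hmu1
  · -- Converse direction
    intro c hc1 hN
    obtain ⟨N, hc2⟩ := hN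
    set aa : ℤ → RatFunc k :=
      fun i => algebraMap k[X] (RatFunc k) (∏ t ∈ Finset.Ico i (N:ℤ), c t) with haa
    have hmono : ∀ i : ℤ, (∏ t ∈ Finset.Ico i (N:ℤ), c t).Monic :=
      fun i => monic_prod_of_monic _ _ fun t _ => (hc1 t).1
    have ha0 : ∀ i, aa i ≠ 0 := by
      intro i h
      have h2 : algebraMap k[X] (RatFunc k) (∏ t ∈ Finset.Ico i (N:ℤ), c t)
          = algebraMap k[X] (RatFunc k) 0 := by rw [map_zero]; exact h
      exact (hmono i).ne_zero (alginj h2)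
    have hstep : ∀ i, aa i = algebraMap k[X] (RatFunc k) (c i) * aa (i+1) := by
      intro i
      rcases lt_or_ge i (N:ℤ) with h | h
      · rw [haa]
        dsimp only
        rw [← map_mul, prod_Ico_bot h]
      · have hci : c i = 1 := (hc2 i (by omega)).1
        rw [haa]
        dsimp only
        rw [Finset.Ico_eq_empty (by omega), Finset.Ico_eq_empty (by omega), hci]
        simp
    have key : ∀ (i' : ℤ) (qq : RatFunc k) (p : k[X]),
        Fm φ x i' qq * φ (algebraMap k[X] (RatFunc k) (pshift k (-i') p))
          = Fm φ x i' (algebraMap k[X] (RatFunc k) p * qq) := by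
      intro i' qq p
      rw [phi_eq φ x, Fm_mul σ φ x hx, sigma_alg σ hσ, pshift_pshift',
        show i' + -i' = 0 from by omega, pshift_zero', add_zero]
      congr 1
      ring
    refine ⟨Mset φ x (Pa aa), aa, ha0, hstep, ?_, ?_, ?_⟩
    · -- membership characterization
      intro w
      constructor
      · intro hw
        obtain ⟨d, hd, h2⟩ := Mset_rep φ x hw
        exact ⟨d, fun i => hd i, h2⟩
      · rintro ⟨d, hd, rfl⟩
        exact sum_mem_Mset φ x _ d (fun i => hd i)
    · -- module closure
      intro w hw u hu
      refine Mset_mul σ φ x hx ?_ hw (gwa_sub_B σ φ x hx hσ f u hu)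
      intro i j q r hq hr
      obtain ⟨p, rfl⟩ := hq
      obtain ⟨p', hdvd, rfl⟩ := hr
      rcases le_or_gt 0 j with hj | hj
      · have harel := a_rel hstep i (i+j) (by omega)
        refine ⟨p * pshift k i p' * ∏ t ∈ Finset.Ico i (i+j), c t, ?_⟩
        rw [sigma_alg σ hσ, harel]
        simp only [map_mul]
        ring
      · have harel := a_rel hstep (i+j) i (by omega)
        obtain ⟨h', hh'⟩ : (∏ t ∈ Finset.Ico (i+j) i, c t) ∣ pshift k i p' := by
          refine dvd_trans ?_ (pshift_dvd i hdvd)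
          rw [pshift_gprod, show j + i = i + j from by omega]
          exact Finset.prod_dvd_prod_of_dvd _ _ fun t _ => (hc1 t).2
        refine ⟨p * h', ?_⟩
        rw [sigma_alg σ hσ, hh', harel]
        simp only [map_mul]
        ring
    · -- finite generation
      refine ⟨(Finset.Icc (-(N:ℤ)) (N:ℤ)).image (fun i => Fm φ x i (aa i)), ?_, ?_⟩
      · intro s hs
        simp only [Finset.coe_image, Set.mem_image, Finset.mem_coe, Finset.mem_Icc] at hs
        obtain ⟨i, -, rfl⟩ := hs
        exact AddSubgroup.subset_closure ⟨i, aa i, ⟨1, by rw [map_one, one_mul]⟩, rfl⟩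
      · intro w hw
        obtain ⟨d, hd, rfl⟩ := Mset_rep φ x hw
        rw [Finsupp.sum]
        refine AddSubgroup.sum_mem _ fun i _ => ?_
        refine AddSubgroup.subset_closure ?_
        obtain ⟨p, hp⟩ := hd i
        rcases le_or_gt i (N:ℤ) with hiN | hiN
        · rcases le_or_gt (-(N:ℤ)) i with hiN2 | hiN2
          · -- middle range
            refine ⟨Fm φ x i (aa i),
              Finset.mem_image.2 ⟨i, Finset.mem_Icc.2 ⟨hiN2, hiN⟩, rfl⟩,
              φ (algebraMap k[X] (RatFunc k) (pshift k (-i) p)), phi_mem σ φ x f _, ?_⟩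
            rw [key i (aa i) p, ← hp]
          · -- i < -N
            set m : ℕ := (-(N:ℤ) - i).toNat with hm
            have hmz : -(m:ℤ) = i + (N:ℤ) := by
              rw [hm]
              omega
            refine ⟨Fm φ x (-(N:ℤ)) (aa (-(N:ℤ))),
              Finset.mem_image.2 ⟨-(N:ℤ), Finset.mem_Icc.2 ⟨le_rfl, by omega⟩, rfl⟩,
              (gwaY k Q σ φ x f) ^ m * φ (algebraMap k[X] (RatFunc k) (pshift k (-i) p)),
              mul_mem (pow_mem (y_mem σ φ x f) m) (phi_mem σ φ x f _), ?_⟩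
            rw [gwaY_pow σ φ x hx hσ f m, ← mul_assoc, Fm_mul σ φ x hx, sigma_alg σ hσ]
            have e3 : pshift k (-(N:ℤ)) (gprod f (-(m:ℤ)))
                = ∏ t ∈ Finset.Ico i (-(N:ℤ)), pshift k t f := by
              rw [pshift_gprod, show -(m:ℤ) + -(N:ℤ) = i from by omega]
            have e4 : (∏ t ∈ Finset.Ico i (-(N:ℤ)), pshift k t f)
                = ∏ t ∈ Finset.Ico i (-(N:ℤ)), c t := by
              refine Finset.prod_congr rfl fun t ht => ?_
              rw [Finset.mem_Ico] at ht
              have h5 := (hc2 (-t) (by omega)).2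
              simp only [neg_neg] at h5
              exact h5.symm
            have e5 : aa (-(N:ℤ)) * algebraMap k[X] (RatFunc k)
                (∏ t ∈ Finset.Ico i (-(N:ℤ)), c t) = aa i := by
              rw [haa]
              dsimp only
              rw [← map_mul, mul_comm, ← prod_Ico_split (by omega : i ≤ -(N:ℤ)) (by omega)]
            rw [e3, e4, e5, show -(N:ℤ) + -(m:ℤ) = i from by omega, key i (aa i) p, ← hp]
        · -- i > N
          refine ⟨Fm φ x (N:ℤ) (aa (N:ℤ)),
            Finset.mem_image.2 ⟨(N:ℤ), Finset.mem_Icc.2 ⟨by omega, le_rfl⟩, rfl⟩,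
            φ (algebraMap k[X] (RatFunc k) (pshift k (-(N:ℤ)) p))
              * ((x:Q) ^ (i - (N:ℤ)).toNat),
            mul_mem (phi_mem σ φ x f _) (pow_mem (x_mem σ φ x f) _), ?_⟩
          have e0 : aa (N:ℤ) = 1 := by
            rw [haa]
            dsimp only
            rw [Finset.Ico_self, Finset.prod_empty, map_one]
          have e1 : aa i = 1 := by
            rw [haa]
            dsimp only
            rw [Finset.Ico_eq_empty (by omega), Finset.prod_empty, map_one]
          have e2 : ((x:Q) ^ (i - (N:ℤ)).toNat) = Fm φ x (i - (N:ℤ)) 1 := by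
            have h6 : (((i - (N:ℤ)).toNat : ℕ) : ℤ) = i - (N:ℤ) := Int.toNat_of_nonneg (by omega)
            rw [Fm]
            rw [map_one, one_mul]
            conv_rhs => rw [← h6]
            rw [zpow_natCast, ← Units.val_pow_eq_pow_val]
          rw [← mul_assoc, key (N:ℤ) (aa (N:ℤ)) p, e2, Fm_mul σ φ x hx, map_one, mul_one,
            show (N:ℤ) + (i - (N:ℤ)) = i from by omega, hp, e0, e1]
end
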